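/- arXiv:2411.01862 — 8 statements merged into one kernel-verified Lean document; each statement's English description precedes it below -/
import Mathlib

section
/- Let φ, φ₁, φ₂ : [0,1] → ℝ satisfy assumption (A). Then the operator T defined by Tu(x) = φ(x)·u(φ₁(x)) + (1−φ(x))·u(φ₂(x)) maps H₀¹[0,1] into H₀¹[0,1]; that is, for every u ∈ H₀¹[0,1], the function Tu is Lipschitz on [0,1] and satisfies Tu(0) = 0 and Tu(1) = 0. -/
open Set

/-- `v` is Lipschitz on `[0,1]`. -/
def IsLipOn01 (v : ℝ → ℝ) : Prop := ∃ K : NNReal, LipschitzOnWith K v (Icc (0:ℝ) 1)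

/-- `v ∈ H₀¹[0,1]`: Lipschitz on `[0,1]` with `v 0 = v 1 = 0`. -/
def MemH01 (v : ℝ → ℝ) : Prop := IsLipOn01 v ∧ v 0 = 0 ∧ v 1 = 0

/-- The operator `T` maps `H₀¹[0,1]` into `H₀¹[0,1]`. -/
theorem operator_T_maps_H01_to_H01 (φ φ₁ φ₂ : ℝ → ℝ)
    (hφ : IsLipOn01 φ) (hφ0 : φ 0 = 0) (hφ1 : φ 1 = 1)
    (hφmem : ∀ x ∈ Icc (0:ℝ) 1, φ x ∈ Icc (0:ℝ) 1)
    (hφ₁ : IsLipOn01 φ₁) (hφ₁1 : φ₁ 1 = 1)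
    (hφ₁mem : ∀ x ∈ Icc (0:ℝ) 1, φ₁ x ∈ Icc (0:ℝ) 1)
    (hφ₂ : IsLipOn01 φ₂) (hφ₂0 : φ₂ 0 = 0)
    (hφ₂mem : ∀ x ∈ Icc (0:ℝ) 1, φ₂ x ∈ Icc (0:ℝ) 1)
    (u : ℝ → ℝ) (hu : MemH01 u) :
    MemH01 (fun x => φ x * u (φ₁ x) + (1 - φ x) * u (φ₂ x)) := by
  obtain ⟨⟨Ku, hKu⟩, hu0, hu1⟩ := hu
  obtain ⟨Kφ, hKφ⟩ := hφ
  obtain ⟨K1, hK1⟩ := hφ₁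
  obtain ⟨K2, hK2⟩ := hφ₂
  rw [lipschitzOnWith_iff_dist_le_mul] at hKu hKφ hK1 hK2
  have mem01 : (0:ℝ) ∈ Icc (0:ℝ) 1 := ⟨le_refl 0, zero_le_one⟩
  have mem11 : (1:ℝ) ∈ Icc (0:ℝ) 1 := ⟨zero_le_one, le_refl 1⟩
  -- bound: for y ∈ [0,1], |u y| ≤ Ku
  have ubound : ∀ y ∈ Icc (0:ℝ) 1, |u y| ≤ Ku := by
    intro y hy
    have := hKu y hy 0 mem01
    rw [hu0] at this
    simp only [Real.dist_eq, sub_zero] at this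
    calc |u y| ≤ Ku * |y| := this
      _ ≤ Ku * 1 := by
          apply mul_le_mul_of_nonneg_left _ Ku.2
          rw [abs_of_nonneg hy.1]; exact hy.2
      _ = Ku := mul_one _
  refine ⟨⟨2 * Kφ * Ku + Ku * K1 + Ku * K2, ?_⟩, ?_, ?_⟩
  · rw [lipschitzOnWith_iff_dist_le_mul]
    intro x hx y hy
    simp only [Real.dist_eq]
    push_cast
    have hφx := hφmem x hx
    have hφy := hφmem y hy
    have hux1 := ubound _ (hφ₁mem x hx)
    have huy1 := ubound _ (hφ₁mem y hy)
    have hux2 := ubound _ (hφ₂mem x hx)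
    have huy2 := ubound _ (hφ₂mem y hy)
    have hdφ := hKφ x hx y hy
    have hd1 : |u (φ₁ x) - u (φ₁ y)| ≤ Ku * (K1 * |x - y|) := by
      have h1 := hKu _ (hφ₁mem x hx) _ (hφ₁mem y hy)
      have h2 := hK1 x hx y hy
      simp only [Real.dist_eq] at h1 h2 ⊢
      calc |u (φ₁ x) - u (φ₁ y)| ≤ Ku * |φ₁ x - φ₁ y| := h1
        _ ≤ Ku * (K1 * |x - y|) := mul_le_mul_of_nonneg_left h2 Ku.2
    have hd2 : |u (φ₂ x) - u (φ₂ y)| ≤ Ku * (K2 * |x - y|) := by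
      have h1 := hKu _ (hφ₂mem x hx) _ (hφ₂mem y hy)
      have h2 := hK2 x hx y hy
      simp only [Real.dist_eq] at h1 h2 ⊢
      calc |u (φ₂ x) - u (φ₂ y)| ≤ Ku * |φ₂ x - φ₂ y| := h1
        _ ≤ Ku * (K2 * |x - y|) := mul_le_mul_of_nonneg_left h2 Ku.2
    simp only [Real.dist_eq] at hdφ
    have key : φ x * u (φ₁ x) + (1 - φ x) * u (φ₂ x) -
        (φ y * u (φ₁ y) + (1 - φ y) * u (φ₂ y)) =
        (φ x - φ y) * u (φ₁ x) + φ y * (u (φ₁ x) - u (φ₁ y)) +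
        ((φ y - φ x) * u (φ₂ x) + (1 - φ y) * (u (φ₂ x) - u (φ₂ y))) := by ring
    rw [key]
    have t1 : |(φ x - φ y) * u (φ₁ x)| ≤ Kφ * |x - y| * Ku := by
      rw [abs_mul]
      exact mul_le_mul hdφ hux1 (abs_nonneg _) (by positivity)
    have t2 : |φ y * (u (φ₁ x) - u (φ₁ y))| ≤ Ku * (K1 * |x - y|) := by
      rw [abs_mul]
      calc |φ y| * |u (φ₁ x) - u (φ₁ y)| ≤ 1 * (Ku * (K1 * |x - y|)) := by
            apply mul_le_mul _ hd1 (abs_nonneg _) zero_le_one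
            rw [abs_of_nonneg hφy.1]; exact hφy.2
        _ = Ku * (K1 * |x - y|) := one_mul _
    have t3 : |(φ y - φ x) * u (φ₂ x)| ≤ Kφ * |x - y| * Ku := by
      rw [abs_mul, abs_sub_comm]
      exact mul_le_mul hdφ hux2 (abs_nonneg _) (by positivity)
    have t4 : |(1 - φ y) * (u (φ₂ x) - u (φ₂ y))| ≤ Ku * (K2 * |x - y|) := by
      rw [abs_mul]
      calc |1 - φ y| * |u (φ₂ x) - u (φ₂ y)| ≤ 1 * (Ku * (K2 * |x - y|)) := by
            apply mul_le_mul _ hd2 (abs_nonneg _) zero_le_one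
            rw [abs_of_nonneg (by linarith [hφy.2])]; linarith [hφy.1]
        _ = Ku * (K2 * |x - y|) := one_mul _
    calc |(φ x - φ y) * u (φ₁ x) + φ y * (u (φ₁ x) - u (φ₁ y)) +
        ((φ y - φ x) * u (φ₂ x) + (1 - φ y) * (u (φ₂ x) - u (φ₂ y)))|
        ≤ |(φ x - φ y) * u (φ₁ x) + φ y * (u (φ₁ x) - u (φ₁ y))| +
          |(φ y - φ x) * u (φ₂ x) + (1 - φ y) * (u (φ₂ x) - u (φ₂ y))| := abs_add_le _ _
      _ ≤ (|(φ x - φ y) * u (φ₁ x)| + |φ y * (u (φ₁ x) - u (φ₁ y))|) +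
          (|(φ y - φ x) * u (φ₂ x)| + |(1 - φ y) * (u (φ₂ x) - u (φ₂ y))|) :=
            add_le_add (abs_add_le _ _) (abs_add_le _ _)
      _ ≤ (Kφ * |x - y| * Ku + Ku * (K1 * |x - y|)) +
          (Kφ * |x - y| * Ku + Ku * (K2 * |x - y|)) :=
            add_le_add (add_le_add t1 t2) (add_le_add t3 t4)
      _ = (2 * Kφ * Ku + Ku * K1 + Ku * K2) * |x - y| := by ring
  · simp [hφ0, hφ₂0, hu0]
  · simp [hφ1, hφ₁1, hu1]
end

section
/- Let φ, φ₁, φ₂ : [0,1] → ℝ satisfy assumption (A) and let T be the operator Tu(x) = φ(x)·u(φ₁(x)) + (1−φ(x))·u(φ₂(x)). Then for every u ∈ H₀¹[0,1], the Lipschitz seminorm of Tu satisfies ‖Tu‖ ≤ (1+‖φ‖)·(‖φ₁‖+‖φ₂‖)·‖u‖. -/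
open Set

/-- The Lipschitz seminorm of `v` on `[0,1]`. -/
noncomputable def lipSemi (v : ℝ → ℝ) : ℝ :=
  sSup {r : ℝ | ∃ x ∈ Icc (0:ℝ) 1, ∃ y ∈ Icc (0:ℝ) 1, x ≠ y ∧ r = |v x - v y| / |x - y|}

lemma lipSemi_nonneg (v : ℝ → ℝ) : 0 ≤ lipSemi v := by
  apply Real.sSup_nonneg
  rintro r ⟨x, hx, y, hy, hxy, rfl⟩
  positivity

lemma abs_sub_le_lipSemi {v : ℝ → ℝ} (hv : IsLipOn01 v) {x y : ℝ}
    (hx : x ∈ Icc (0:ℝ) 1) (hy : y ∈ Icc (0:ℝ) 1) :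
    |v x - v y| ≤ lipSemi v * |x - y| := by
  obtain ⟨K, hK⟩ := hv
  rcases eq_or_ne x y with rfl | hxy
  · simp
  have hxyp : (0:ℝ) < |x - y| := abs_pos.2 (sub_ne_zero.2 hxy)
  have hbdd : BddAbove {r : ℝ | ∃ x ∈ Icc (0:ℝ) 1, ∃ y ∈ Icc (0:ℝ) 1, x ≠ y ∧
      r = |v x - v y| / |x - y|} := by
    refine ⟨K, ?_⟩
    rintro r ⟨a, ha, b, hb, hab, rfl⟩
    have h := hK.dist_le_mul a ha b hb
    rw [div_le_iff₀ (abs_pos.2 (sub_ne_zero.2 hab))]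
    simpa [Real.dist_eq] using h
  have hle : |v x - v y| / |x - y| ≤ lipSemi v :=
    le_csSup hbdd ⟨x, hx, y, hy, hxy, rfl⟩
  calc |v x - v y| = |v x - v y| / |x - y| * |x - y| := by field_simp
    _ ≤ lipSemi v * |x - y| := mul_le_mul_of_nonneg_right hle (abs_nonneg _)

/-- Under assumption (A) the operator `T` satisfies
`‖Tu‖ ≤ (1 + ‖φ‖)(‖φ₁‖ + ‖φ₂‖) ‖u‖` for every `u ∈ H₀¹[0,1]`. -/
theorem lipSemi_T_bound (φ φ₁ φ₂ : ℝ → ℝ)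
    (hφ : IsLipOn01 φ) (hφ0 : φ 0 = 0) (hφ1 : φ 1 = 1)
    (hφmem : ∀ x ∈ Icc (0:ℝ) 1, φ x ∈ Icc (0:ℝ) 1)
    (hφ₁ : IsLipOn01 φ₁) (hφ₁1 : φ₁ 1 = 1)
    (hφ₁mem : ∀ x ∈ Icc (0:ℝ) 1, φ₁ x ∈ Icc (0:ℝ) 1)
    (hφ₂ : IsLipOn01 φ₂) (hφ₂0 : φ₂ 0 = 0)
    (hφ₂mem : ∀ x ∈ Icc (0:ℝ) 1, φ₂ x ∈ Icc (0:ℝ) 1)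
    (u : ℝ → ℝ) (hu : MemH01 u) :
    lipSemi (fun x => φ x * u (φ₁ x) + (1 - φ x) * u (φ₂ x)) ≤
      (1 + lipSemi φ) * (lipSemi φ₁ + lipSemi φ₂) * lipSemi u := by
  obtain ⟨hulip, hu0, hu1⟩ := hu
  have h0 : (0:ℝ) ∈ Icc (0:ℝ) 1 := left_mem_Icc.2 zero_le_one
  have h1 : (1:ℝ) ∈ Icc (0:ℝ) 1 := right_mem_Icc.2 zero_le_one
  have hLu : 0 ≤ lipSemi u := lipSemi_nonneg u
  have hLφ : 0 ≤ lipSemi φ := lipSemi_nonneg φ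
  have hL1 : 0 ≤ lipSemi φ₁ := lipSemi_nonneg φ₁
  have hL2 : 0 ≤ lipSemi φ₂ := lipSemi_nonneg φ₂
  apply Real.sSup_le
  · rintro r ⟨x, hx, y, hy, hxy, rfl⟩
    rw [div_le_iff₀ (abs_pos.2 (sub_ne_zero.2 hxy))]
    have hφx := hφmem x hx
    -- bounds on differences
    have hA1 : |u (φ₁ x) - u (φ₁ y)| ≤ lipSemi u * (lipSemi φ₁ * |x - y|) := by
      calc |u (φ₁ x) - u (φ₁ y)| ≤ lipSemi u * |φ₁ x - φ₁ y| :=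
            abs_sub_le_lipSemi hulip (hφ₁mem x hx) (hφ₁mem y hy)
        _ ≤ lipSemi u * (lipSemi φ₁ * |x - y|) :=
            mul_le_mul_of_nonneg_left (abs_sub_le_lipSemi hφ₁ hx hy) hLu
    have hA2 : |u (φ₂ x) - u (φ₂ y)| ≤ lipSemi u * (lipSemi φ₂ * |x - y|) := by
      calc |u (φ₂ x) - u (φ₂ y)| ≤ lipSemi u * |φ₂ x - φ₂ y| :=
            abs_sub_le_lipSemi hulip (hφ₂mem x hx) (hφ₂mem y hy)
        _ ≤ lipSemi u * (lipSemi φ₂ * |x - y|) :=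
            mul_le_mul_of_nonneg_left (abs_sub_le_lipSemi hφ₂ hx hy) hLu
    have hD : |φ x - φ y| ≤ lipSemi φ * |x - y| := abs_sub_le_lipSemi hφ hx hy
    -- bound on |u (φ₁ y)|
    have hB1 : |u (φ₁ y)| ≤ lipSemi u * lipSemi φ₁ := by
      have e1 : |u (φ₁ y)| = |u (φ₁ y) - u 1| := by rw [hu1, sub_zero]
      have e2 : |u (φ₁ y) - u 1| ≤ lipSemi u * |φ₁ y - φ₁ 1| := by
        rw [hφ₁1]; exact abs_sub_le_lipSemi hulip (hφ₁mem y hy) h1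
      have e3 : |φ₁ y - φ₁ 1| ≤ lipSemi φ₁ * |y - 1| := abs_sub_le_lipSemi hφ₁ hy h1
      have e4 : |y - 1| ≤ 1 := abs_le.2 ⟨by linarith [hy.1], by linarith [hy.2]⟩
      have : lipSemi u * |φ₁ y - φ₁ 1| ≤ lipSemi u * lipSemi φ₁ := by
        apply mul_le_mul_of_nonneg_left _ hLu
        calc |φ₁ y - φ₁ 1| ≤ lipSemi φ₁ * |y - 1| := e3
          _ ≤ lipSemi φ₁ * 1 := mul_le_mul_of_nonneg_left e4 hL1
          _ = lipSemi φ₁ := mul_one _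
      linarith [e2.trans this, e1.ge, e1.le]
    have hB2 : |u (φ₂ y)| ≤ lipSemi u * lipSemi φ₂ := by
      have e1 : |u (φ₂ y)| = |u (φ₂ y) - u 0| := by rw [hu0, sub_zero]
      have e2 : |u (φ₂ y) - u 0| ≤ lipSemi u * |φ₂ y - φ₂ 0| := by
        rw [hφ₂0]; exact abs_sub_le_lipSemi hulip (hφ₂mem y hy) h0
      have e3 : |φ₂ y - φ₂ 0| ≤ lipSemi φ₂ * |y - 0| := abs_sub_le_lipSemi hφ₂ hy h0
      have e4 : |y - 0| ≤ 1 := abs_le.2 ⟨by linarith [hy.1], by linarith [hy.2]⟩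
      have : lipSemi u * |φ₂ y - φ₂ 0| ≤ lipSemi u * lipSemi φ₂ := by
        apply mul_le_mul_of_nonneg_left _ hLu
        calc |φ₂ y - φ₂ 0| ≤ lipSemi φ₂ * |y - 0| := e3
          _ ≤ lipSemi φ₂ * 1 := mul_le_mul_of_nonneg_left e4 hL2
          _ = lipSemi φ₂ := mul_one _
      linarith [e2.trans this, e1.le]
    have hB : |u (φ₁ y) - u (φ₂ y)| ≤ lipSemi u * lipSemi φ₁ + lipSemi u * lipSemi φ₂ :=
      (abs_sub _ _).trans (add_le_add hB1 hB2)
    -- decomposition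
    have hdec : (φ x * u (φ₁ x) + (1 - φ x) * u (φ₂ x)) -
        (φ y * u (φ₁ y) + (1 - φ y) * u (φ₂ y)) =
        φ x * (u (φ₁ x) - u (φ₁ y)) + (1 - φ x) * (u (φ₂ x) - u (φ₂ y)) +
        (φ x - φ y) * (u (φ₁ y) - u (φ₂ y)) := by ring
    have t1 : |φ x * (u (φ₁ x) - u (φ₁ y))| ≤ lipSemi u * (lipSemi φ₁ * |x - y|) := by
      rw [abs_mul, abs_of_nonneg hφx.1]
      calc φ x * |u (φ₁ x) - u (φ₁ y)| ≤ 1 * (lipSemi u * (lipSemi φ₁ * |x - y|)) :=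
            mul_le_mul hφx.2 hA1 (abs_nonneg _) zero_le_one
        _ = lipSemi u * (lipSemi φ₁ * |x - y|) := one_mul _
    have t2 : |(1 - φ x) * (u (φ₂ x) - u (φ₂ y))| ≤ lipSemi u * (lipSemi φ₂ * |x - y|) := by
      rw [abs_mul, abs_of_nonneg (by linarith [hφx.2] : (0:ℝ) ≤ 1 - φ x)]
      calc (1 - φ x) * |u (φ₂ x) - u (φ₂ y)| ≤ 1 * (lipSemi u * (lipSemi φ₂ * |x - y|)) :=
            mul_le_mul (by linarith [hφx.1]) hA2 (abs_nonneg _) zero_le_one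
        _ = lipSemi u * (lipSemi φ₂ * |x - y|) := one_mul _
    have t3 : |(φ x - φ y) * (u (φ₁ y) - u (φ₂ y))| ≤
        (lipSemi φ * |x - y|) * (lipSemi u * lipSemi φ₁ + lipSemi u * lipSemi φ₂) := by
      rw [abs_mul]
      exact mul_le_mul hD hB (abs_nonneg _) (by positivity)
    have habs : |(φ x * u (φ₁ x) + (1 - φ x) * u (φ₂ x)) -
        (φ y * u (φ₁ y) + (1 - φ y) * u (φ₂ y))| ≤
        lipSemi u * (lipSemi φ₁ * |x - y|) + lipSemi u * (lipSemi φ₂ * |x - y|) +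
        (lipSemi φ * |x - y|) * (lipSemi u * lipSemi φ₁ + lipSemi u * lipSemi φ₂) := by
      rw [hdec]
      calc |φ x * (u (φ₁ x) - u (φ₁ y)) + (1 - φ x) * (u (φ₂ x) - u (φ₂ y)) +
            (φ x - φ y) * (u (φ₁ y) - u (φ₂ y))|
          ≤ |φ x * (u (φ₁ x) - u (φ₁ y)) + (1 - φ x) * (u (φ₂ x) - u (φ₂ y))| +
            |(φ x - φ y) * (u (φ₁ y) - u (φ₂ y))| := abs_add_le _ _
        _ ≤ |φ x * (u (φ₁ x) - u (φ₁ y))| + |(1 - φ x) * (u (φ₂ x) - u (φ₂ y))| +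
            |(φ x - φ y) * (u (φ₁ y) - u (φ₂ y))| :=
            add_le_add_left (abs_add_le _ _) _
        _ ≤ _ := by linarith
    calc |(fun x => φ x * u (φ₁ x) + (1 - φ x) * u (φ₂ x)) x -
          (fun x => φ x * u (φ₁ x) + (1 - φ x) * u (φ₂ x)) y|
        = |(φ x * u (φ₁ x) + (1 - φ x) * u (φ₂ x)) -
          (φ y * u (φ₁ y) + (1 - φ y) * u (φ₂ y))| := rfl
      _ ≤ _ := habs
      _ ≤ (1 + lipSemi φ) * (lipSemi φ₁ + lipSemi φ₂) * lipSemi u * |x - y| := by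
          ring_nf
          nlinarith [abs_nonneg (x - y)]
  · positivity
end

section
/- Let φ, φ₁, φ₂, f satisfy assumption (A) and additionally be continuously differentiable, and let u ∈ H₀¹[0,1] satisfy u(x) = φ(x)·u(φ₁(x)) + (1−φ(x))·u(φ₂(x)) + f(x) on [0,1]. For h ≠ 0 define the difference quotient D_h u(x) = (u(x+h) − u(x))/h for x with x, x+h ∈ [0,1]. Then sup_x |D_h u(x)| ≤ (‖φ₁'‖_∞ + ‖φ₂'‖_∞)·‖u‖ + 2‖φ'‖_∞·‖u‖_∞ + ‖f'‖_∞, where ‖·‖ is the Lipschitz seminorm and ‖·‖_∞ the supremum norm on [0,1]. -/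
open Set


lemma lip_bound (v : ℝ → ℝ) (hv : ∃ K : NNReal, LipschitzOnWith K v (Icc (0:ℝ) 1))
    {x y : ℝ} (hx : x ∈ Icc (0:ℝ) 1) (hy : y ∈ Icc (0:ℝ) 1) :
    |v x - v y| ≤ (sSup {r : ℝ | ∃ x ∈ Icc (0:ℝ) 1, ∃ y ∈ Icc (0:ℝ) 1, x ≠ y ∧ r = |v x - v y| / |x - y|}) * |x - y| := by
  obtain ⟨K, hK⟩ := hv
  have hbdd : BddAbove {r : ℝ | ∃ x ∈ Icc (0:ℝ) 1, ∃ y ∈ Icc (0:ℝ) 1, x ≠ y ∧ r = |v x - v y| / |x - y|} := by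
    refine ⟨K, ?_⟩
    rintro r ⟨a, ha, b, hb, hab, rfl⟩
    have hd : (0:ℝ) < |a - b| := by
      exact abs_sub_pos.mpr hab
    rw [div_le_iff₀ hd]
    have := hK.dist_le_mul a ha b hb
    simpa [Real.dist_eq] using this
  rcases eq_or_ne x y with rfl | hxy
  · simp
  · have hmem : |v x - v y| / |x - y| ∈ {r : ℝ | ∃ x ∈ Icc (0:ℝ) 1, ∃ y ∈ Icc (0:ℝ) 1, x ≠ y ∧ r = |v x - v y| / |x - y|} :=
      ⟨x, hx, y, hy, hxy, rfl⟩
    have hle := le_csSup hbdd hmem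
    have hd : (0:ℝ) < |x - y| := by exact abs_sub_pos.mpr hxy
    calc |v x - v y| = |v x - v y| / |x - y| * |x - y| := by field_simp
    _ ≤ _ := by exact mul_le_mul_of_nonneg_right hle hd.le

lemma supNorm_bddAbove (v : ℝ → ℝ) (hc : ContinuousOn v (Icc (0:ℝ) 1)) :
    BddAbove {r : ℝ | ∃ x ∈ Icc (0:ℝ) 1, r = |v x|} := by
  have : {r : ℝ | ∃ x ∈ Icc (0:ℝ) 1, r = |v x|} = (fun x => |v x|) '' Icc (0:ℝ) 1 := by
    ext r; constructor
    · rintro ⟨x, hx, rfl⟩; exact ⟨x, hx, rfl⟩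
    · rintro ⟨x, hx, rfl⟩; exact ⟨x, hx, rfl⟩
  rw [this]
  exact (isCompact_Icc.image_of_continuousOn (hc.abs)).bddAbove

lemma supNorm_bound (v : ℝ → ℝ) (hc : ContinuousOn v (Icc (0:ℝ) 1)) {x : ℝ}
    (hx : x ∈ Icc (0:ℝ) 1) :
    |v x| ≤ sSup {r : ℝ | ∃ x ∈ Icc (0:ℝ) 1, r = |v x|} :=
  le_csSup (supNorm_bddAbove v hc) ⟨x, hx, rfl⟩

lemma deriv_sup_bound (v v' : ℝ → ℝ)
    (hd : ∀ x ∈ Icc (0:ℝ) 1, HasDerivWithinAt v (v' x) (Icc (0:ℝ) 1) x)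
    (hc : ContinuousOn v' (Icc (0:ℝ) 1))
    {x y : ℝ} (hx : x ∈ Icc (0:ℝ) 1) (hy : y ∈ Icc (0:ℝ) 1) :
    |v y - v x| ≤ (sSup {r : ℝ | ∃ x ∈ Icc (0:ℝ) 1, r = |v' x|}) * |y - x| := by
  have := Convex.norm_image_sub_le_of_norm_hasDerivWithin_le hd
    (fun z hz => by simpa [Real.norm_eq_abs] using supNorm_bound v' hc hz)
    (convex_Icc 0 1) hx hy
  simpa [Real.norm_eq_abs] using this


/-- The supremum norm of `v` on `[0,1]`. -/
noncomputable def supNorm (v : ℝ → ℝ) : ℝ :=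
  sSup {r : ℝ | ∃ x ∈ Icc (0:ℝ) 1, r = |v x|}

/-- Bound on the difference quotient `D_h u` of the solution of the functional equation:
`sup_x |D_h u(x)| ≤ (‖φ₁'‖_∞ + ‖φ₂'‖_∞) ‖u‖ + 2 ‖φ'‖_∞ ‖u‖_∞ + ‖f'‖_∞`. -/
theorem difference_quotient_sup_bound (φ φ₁ φ₂ f u φ' φ₁' φ₂' f' : ℝ → ℝ)
    (hφ : IsLipOn01 φ) (hφ0 : φ 0 = 0) (hφ1 : φ 1 = 1)
    (hφmem : ∀ x ∈ Icc (0:ℝ) 1, φ x ∈ Icc (0:ℝ) 1)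
    (hφ₁ : IsLipOn01 φ₁) (hφ₁1 : φ₁ 1 = 1)
    (hφ₁mem : ∀ x ∈ Icc (0:ℝ) 1, φ₁ x ∈ Icc (0:ℝ) 1)
    (hφ₂ : IsLipOn01 φ₂) (hφ₂0 : φ₂ 0 = 0)
    (hφ₂mem : ∀ x ∈ Icc (0:ℝ) 1, φ₂ x ∈ Icc (0:ℝ) 1)
    (hf : MemH01 f)
    (hφd : ∀ x ∈ Icc (0:ℝ) 1, HasDerivWithinAt φ (φ' x) (Icc (0:ℝ) 1) x)
    (hφ'c : ContinuousOn φ' (Icc (0:ℝ) 1))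
    (hφ₁d : ∀ x ∈ Icc (0:ℝ) 1, HasDerivWithinAt φ₁ (φ₁' x) (Icc (0:ℝ) 1) x)
    (hφ₁'c : ContinuousOn φ₁' (Icc (0:ℝ) 1))
    (hφ₂d : ∀ x ∈ Icc (0:ℝ) 1, HasDerivWithinAt φ₂ (φ₂' x) (Icc (0:ℝ) 1) x)
    (hφ₂'c : ContinuousOn φ₂' (Icc (0:ℝ) 1))
    (hfd : ∀ x ∈ Icc (0:ℝ) 1, HasDerivWithinAt f (f' x) (Icc (0:ℝ) 1) x)
    (hf'c : ContinuousOn f' (Icc (0:ℝ) 1))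
    (hu : MemH01 u)
    (heq : ∀ x ∈ Icc (0:ℝ) 1, u x = φ x * u (φ₁ x) + (1 - φ x) * u (φ₂ x) + f x) :
    ∀ h : ℝ, h ≠ 0 → ∀ x : ℝ, x ∈ Icc (0:ℝ) 1 → x + h ∈ Icc (0:ℝ) 1 →
      |(u (x + h) - u x) / h| ≤
        (supNorm φ₁' + supNorm φ₂') * lipSemi u + 2 * supNorm φ' * supNorm u + supNorm f' := by

  intro h hne x hx hxb
  have hIcc := fun z (hz : z ∈ Icc (0:ℝ) 1) => hz
  -- abbreviations
  have hL : ∀ p ∈ Icc (0:ℝ) 1, ∀ q ∈ Icc (0:ℝ) 1, |u p - u q| ≤ lipSemi u * |p - q| := by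
    intro p hp q hq
    exact lip_bound u hu.1 hp hq
  have huc : ContinuousOn u (Icc (0:ℝ) 1) := by
    obtain ⟨K, hK⟩ := hu.1
    exact hK.continuousOn
  have hM : ∀ p ∈ Icc (0:ℝ) 1, |u p| ≤ supNorm u := fun p hp => supNorm_bound u huc hp
  have hb := hxb
  -- derivative bounds
  have hd1 : |φ₁ (x + h) - φ₁ x| ≤ supNorm φ₁' * |h| := by
    simpa [supNorm] using deriv_sup_bound φ₁ φ₁' hφ₁d hφ₁'c hx hb
  have hd2 : |φ₂ (x + h) - φ₂ x| ≤ supNorm φ₂' * |h| := by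
    simpa [supNorm] using deriv_sup_bound φ₂ φ₂' hφ₂d hφ₂'c hx hb
  have hdφ : |φ (x + h) - φ x| ≤ supNorm φ' * |h| := by
    simpa [supNorm] using deriv_sup_bound φ φ' hφd hφ'c hx hb
  have hdf : |f (x + h) - f x| ≤ supNorm f' * |h| := by
    simpa [supNorm] using deriv_sup_bound f f' hfd hf'c hx hb
  -- nonnegativity
  have hL0 : 0 ≤ lipSemi u := by
    have := hL 0 (by norm_num) 1 (by norm_num)
    have h01 : |u 0 - u 1| ≤ lipSemi u := by simpa using this
    have := abs_nonneg (u 0 - u 1)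
    linarith
  have hφb := hφmem (x + h) hb
  have hφa := hφmem x hx
  have hSphi0 : 0 ≤ supNorm φ' :=
    (abs_nonneg (φ' 0)).trans (supNorm_bound φ' hφ'c (by norm_num))
  have habs1 : |φ (x + h)| ≤ 1 := by
    rw [abs_le]; constructor <;> [linarith [hφb.1]; exact hφb.2]
  have habs2 : |1 - φ (x + h)| ≤ 1 := by
    rw [abs_le]; constructor <;> [linarith [hφb.2]; linarith [hφb.1]]
  -- key algebraic identity
  have key : u (x + h) - u x =
      φ (x + h) * (u (φ₁ (x + h)) - u (φ₁ x)) + (φ (x + h) - φ x) * u (φ₁ x)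
      + (1 - φ (x + h)) * (u (φ₂ (x + h)) - u (φ₂ x)) + (φ x - φ (x + h)) * u (φ₂ x)
      + (f (x + h) - f x) := by
    rw [heq (x + h) hb, heq x hx]; ring
  -- bound each term
  have hu1 : |u (φ₁ (x + h)) - u (φ₁ x)| ≤ lipSemi u * (supNorm φ₁' * |h|) := by
    calc |u (φ₁ (x + h)) - u (φ₁ x)| ≤ lipSemi u * |φ₁ (x + h) - φ₁ x| :=
          hL _ (hφ₁mem _ hb) _ (hφ₁mem _ hx)
    _ ≤ _ := mul_le_mul_of_nonneg_left hd1 hL0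
  have hu2 : |u (φ₂ (x + h)) - u (φ₂ x)| ≤ lipSemi u * (supNorm φ₂' * |h|) := by
    calc |u (φ₂ (x + h)) - u (φ₂ x)| ≤ lipSemi u * |φ₂ (x + h) - φ₂ x| :=
          hL _ (hφ₂mem _ hb) _ (hφ₂mem _ hx)
    _ ≤ _ := mul_le_mul_of_nonneg_left hd2 hL0
  have t1 : |φ (x + h) * (u (φ₁ (x + h)) - u (φ₁ x))| ≤ lipSemi u * (supNorm φ₁' * |h|) := by
    rw [abs_mul]
    calc |φ (x + h)| * |u (φ₁ (x + h)) - u (φ₁ x)| ≤ 1 * |u (φ₁ (x + h)) - u (φ₁ x)| :=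
          mul_le_mul_of_nonneg_right habs1 (abs_nonneg _)
    _ = |u (φ₁ (x + h)) - u (φ₁ x)| := one_mul _
    _ ≤ _ := hu1
  have t3 : |(1 - φ (x + h)) * (u (φ₂ (x + h)) - u (φ₂ x))| ≤ lipSemi u * (supNorm φ₂' * |h|) := by
    rw [abs_mul]
    calc |1 - φ (x + h)| * |u (φ₂ (x + h)) - u (φ₂ x)| ≤ 1 * |u (φ₂ (x + h)) - u (φ₂ x)| :=
          mul_le_mul_of_nonneg_right habs2 (abs_nonneg _)
    _ = |u (φ₂ (x + h)) - u (φ₂ x)| := one_mul _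
    _ ≤ _ := hu2
  have t2 : |(φ (x + h) - φ x) * u (φ₁ x)| ≤ supNorm φ' * |h| * supNorm u := by
    rw [abs_mul]
    exact mul_le_mul hdφ (hM _ (hφ₁mem _ hx)) (abs_nonneg _)
      (mul_nonneg hSphi0 (abs_nonneg h))
  have t4 : |(φ x - φ (x + h)) * u (φ₂ x)| ≤ supNorm φ' * |h| * supNorm u := by
    rw [abs_mul, abs_sub_comm]
    exact mul_le_mul hdφ (hM _ (hφ₂mem _ hx)) (abs_nonneg _)
      (mul_nonneg hSphi0 (abs_nonneg h))
  set A := φ (x + h) * (u (φ₁ (x + h)) - u (φ₁ x)) with hA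
  set B := (φ (x + h) - φ x) * u (φ₁ x) with hB
  set C := (1 - φ (x + h)) * (u (φ₂ (x + h)) - u (φ₂ x)) with hC
  set D := (φ x - φ (x + h)) * u (φ₂ x) with hD
  set E := f (x + h) - f x with hE
  have tri : |u (x + h) - u x| ≤ |A| + |B| + |C| + |D| + |E| := by
    rw [key]
    calc |A + B + C + D + E| ≤ |A + B + C + D| + |E| := abs_add_le _ _
    _ ≤ (|A + B + C| + |D|) + |E| := by gcongr; exact abs_add_le _ _
    _ ≤ ((|A + B| + |C|) + |D|) + |E| := by gcongr; exact abs_add_le _ _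
    _ ≤ (((|A| + |B|) + |C|) + |D|) + |E| := by gcongr; exact abs_add_le _ _
  have hmain : |u (x + h) - u x| ≤
      ((supNorm φ₁' + supNorm φ₂') * lipSemi u + 2 * supNorm φ' * supNorm u + supNorm f') * |h| := by
    have := tri
    nlinarith [t1, t2, t3, t4, hdf, abs_nonneg h]
  have hpos : (0:ℝ) < |h| := abs_pos.mpr hne
  rw [abs_div, div_le_iff₀ hpos]
  exact hmain
end

section
/- (Regularity) Let m ≥ 1. Assume φ, φ₁, φ₂, f satisfy assumption (A), φ₁, φ₂ ∈ C^m[0,1], φ, f ∈ C^{m+1}[0,1], and (1+‖φ‖)·(‖φ₁‖+‖φ₂‖) < 1. Then the unique solution u ∈ H₀¹[0,1] of u(x) = φ(x)·u(φ₁(x)) + (1−φ(x))·u(φ₂(x)) + f(x) belongs to C^m[0,1], i.e., u is m times continuously differentiable on [0,1]. -/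
open Set

open Filter Topology MeasureTheory intervalIntegral

namespace Reg

abbrev J : Set ℝ := Icc (0:ℝ) 1

lemma uJ : UniqueDiffOn ℝ J := uniqueDiffOn_Icc (by norm_num)

lemma ratioSet_bddAbove {v : ℝ → ℝ} (hv : IsLipOn01 v) :
    BddAbove {r : ℝ | ∃ x ∈ Icc (0:ℝ) 1, ∃ y ∈ Icc (0:ℝ) 1, x ≠ y ∧ r = |v x - v y| / |x - y|} := by
  obtain ⟨K, hK⟩ := hv
  refine ⟨K, ?_⟩
  rintro r ⟨x, hx, y, hy, hxy, rfl⟩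
  have h1 : |v x - v y| ≤ K * |x - y| := by
    have := hK.dist_le_mul x hx y hy
    simpa [Real.dist_eq] using this
  have h2 : (0:ℝ) < |x - y| := by
    simpa [abs_pos, sub_ne_zero] using hxy
  exact (div_le_iff₀ h2).2 h1

lemma lip_ratio {v : ℝ → ℝ} (hv : IsLipOn01 v) :
    ∀ x ∈ J, ∀ y ∈ J, |v x - v y| ≤ lipSemi v * |x - y| := by
  intro x hx y hy
  rcases eq_or_ne x y with rfl | hxy
  · simp
  have h2 : (0:ℝ) < |x - y| := by simpa [abs_pos, sub_ne_zero] using hxy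
  have hmem : |v x - v y| / |x - y| ∈
      {r : ℝ | ∃ x ∈ Icc (0:ℝ) 1, ∃ y ∈ Icc (0:ℝ) 1, x ≠ y ∧ r = |v x - v y| / |x - y|} :=
    ⟨x, hx, y, hy, hxy, rfl⟩
  have h3 := (div_le_iff₀ h2).1 (le_csSup (ratioSet_bddAbove hv) hmem)
  exact h3

lemma lipSemi_nonneg {v : ℝ → ℝ} (hv : IsLipOn01 v) : 0 ≤ lipSemi v := by
  have hmem : |v 0 - v 1| / |(0:ℝ) - 1| ∈
      {r : ℝ | ∃ x ∈ Icc (0:ℝ) 1, ∃ y ∈ Icc (0:ℝ) 1, x ≠ y ∧ r = |v x - v y| / |x - y|} :=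
    ⟨0, by norm_num, 1, by norm_num, by norm_num, rfl⟩
  have := le_csSup (ratioSet_bddAbove hv) hmem
  have h0 : (0:ℝ) ≤ |v 0 - v 1| / |(0:ℝ) - 1| := by positivity
  exact le_trans h0 this

lemma one_le_lipSemi {v : ℝ → ℝ} (hv : IsLipOn01 v) (h0 : v 0 = 0) (h1 : v 1 = 1) :
    1 ≤ lipSemi v := by
  have hmem : |v 1 - v 0| / |(1:ℝ) - 0| ∈
      {r : ℝ | ∃ x ∈ Icc (0:ℝ) 1, ∃ y ∈ Icc (0:ℝ) 1, x ≠ y ∧ r = |v x - v y| / |x - y|} :=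
    ⟨1, by norm_num, 0, by norm_num, by norm_num, rfl⟩
  have := le_csSup (ratioSet_bddAbove hv) hmem
  rw [h0, h1] at this
  simpa [lipSemi] using this

lemma abs_derivWithin_le {v : ℝ → ℝ} {K : ℝ} (hK : ∀ x ∈ J, ∀ y ∈ J, |v x - v y| ≤ K * |x - y|)
    {x d : ℝ} (hx : x ∈ J) (hd : HasDerivWithinAt v d J x) : |d| ≤ K := by
  have hslope := hasDerivWithinAt_iff_tendsto_slope.1 hd
  have hne : (𝓝[J \ {x}] x).NeBot := by
    rcases lt_or_eq_of_le hx.2 with hlt | heq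
    · have h1 : (𝓝[Ioc x 1] x).NeBot := by
        rw [nhdsWithin_Ioc_eq_nhdsGT hlt]
        exact nhdsGT_neBot x
      exact h1.mono (nhdsWithin_mono x (fun y hy => ⟨⟨le_trans hx.1 hy.1.le, hy.2⟩, ne_of_gt hy.1⟩))
    · have h1 : (𝓝[Ico 0 x] x).NeBot := by
        rw [heq] at hx ⊢
        rw [nhdsWithin_Ico_eq_nhdsLT (by norm_num : (0:ℝ) < 1)]
        exact nhdsLT_neBot 1
      exact h1.mono (nhdsWithin_mono x (fun y hy => ⟨⟨hy.1, le_trans hy.2.le hx.2⟩, ne_of_lt hy.2⟩))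
  have habs : Tendsto (fun y => |slope v x y|) (𝓝[J \ {x}] x) (𝓝 |d|) :=
    (continuous_abs.tendsto d).comp hslope
  refine le_of_tendsto habs ?_
  filter_upwards [self_mem_nhdsWithin] with y hy
  have hyJ : y ∈ J := hy.1
  have hyx : y ≠ x := hy.2
  have h2 : (0:ℝ) < |y - x| := by simpa [abs_pos, sub_ne_zero] using hyx
  have : |v y - v x| ≤ K * |y - x| := hK y hyJ x hx
  rw [slope_def_field, abs_div, div_le_iff₀ h2]
  exact hK y hyJ x hx


/-- Picard iterates of the affine operator `v ↦ a·(v∘p) + b·(v∘q) + h`, starting from `0`. -/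
def iterSeq (a b h p q : ℝ → ℝ) : ℕ → ℝ → ℝ
  | 0 => fun _ => 0
  | n+1 => fun x => a x * iterSeq a b h p q n (p x) + b x * iterSeq a b h p q n (q x) + h x

lemma iterSeq_contDiffOn {a b h p q : ℝ → ℝ} {n : WithTop ℕ∞}
    (hp : MapsTo p J J) (hq : MapsTo q J J)
    (hpC : ContDiffOn ℝ n p J) (hqC : ContDiffOn ℝ n q J)
    (haC : ContDiffOn ℝ n a J) (hbC : ContDiffOn ℝ n b J) (hhC : ContDiffOn ℝ n h J) :
    ∀ k, ContDiffOn ℝ n (iterSeq a b h p q k) J := by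
  intro k
  induction k with
  | zero => exact contDiffOn_const
  | succ k ih =>
    exact ((haC.mul (ih.comp hpC hp)).add (hbC.mul (ih.comp hqC hq))).add hhC

/-- If `g` is a fixed point of the operator and the operator is a sup-norm contraction,
the iterates converge to `g` geometrically. -/
lemma iterSeq_conv {a b h p q g : ℝ → ℝ} {α β Mg : ℝ}
    (hp : MapsTo p J J) (hq : MapsTo q J J)
    (ha : ∀ x ∈ J, |a x| ≤ α) (hb : ∀ x ∈ J, |b x| ≤ β)
    (hMg : ∀ x ∈ J, |g x| ≤ Mg)
    (hgeq : ∀ x ∈ J, g x = a x * g (p x) + b x * g (q x) + h x) :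
    ∀ k, ∀ x ∈ J, |iterSeq a b h p q k x - g x| ≤ Mg * (α + β) ^ k := by
  intro k
  induction k with
  | zero => intro x hx; simpa [iterSeq] using hMg x hx
  | succ k ih =>
    intro x hx
    have hα : 0 ≤ α := le_trans (abs_nonneg _) (ha 0 (by norm_num))
    have hβ : 0 ≤ β := le_trans (abs_nonneg _) (hb 0 (by norm_num))
    have e1 : iterSeq a b h p q (k+1) x - g x =
        a x * (iterSeq a b h p q k (p x) - g (p x)) +
        b x * (iterSeq a b h p q k (q x) - g (q x)) := by
      rw [hgeq x hx]; simp [iterSeq]; ring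
    rw [e1]
    have h1 := ih (p x) (hp hx)
    have h2 := ih (q x) (hq hx)
    calc |a x * (iterSeq a b h p q k (p x) - g (p x)) +
        b x * (iterSeq a b h p q k (q x) - g (q x))|
        ≤ |a x| * |iterSeq a b h p q k (p x) - g (p x)| +
          |b x| * |iterSeq a b h p q k (q x) - g (q x)| := by
          refine le_trans (abs_add_le _ _) ?_
          rw [abs_mul, abs_mul]
      _ ≤ α * (Mg * (α + β) ^ k) + β * (Mg * (α + β) ^ k) := by
          refine add_le_add ?_ ?_
          · exact mul_le_mul (ha x hx) h1 (abs_nonneg _) hα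
          · exact mul_le_mul (hb x hx) h2 (abs_nonneg _) hβ
      _ = Mg * (α + β) ^ (k+1) := by ring

lemma C1step {p q a b h g : ℝ → ℝ} {th1 th2 C r : ℝ}
    (hp : MapsTo p J J) (hq : MapsTo q J J)
    (hpC : ContDiffOn ℝ 1 p J) (hqC : ContDiffOn ℝ 1 q J)
    (haC : ContDiffOn ℝ 1 a J) (hbC : ContDiffOn ℝ 1 b J) (hhC : ContDiffOn ℝ 1 h J)
    (hth1 : ∀ x ∈ J, |a x * derivWithin p J x| ≤ th1)
    (hth2 : ∀ x ∈ J, |b x * derivWithin q J x| ≤ th2)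
    (hth : th1 + th2 < 1)
    (hr0 : 0 ≤ r) (hr1 : r < 1) (hC0 : 0 ≤ C)
    (hconv : ∀ n, ∀ x ∈ J, |iterSeq a b h p q n x - g x| ≤ C * r ^ n)
    (hgc : ContinuousOn g J) :
    ∃ w : ℝ → ℝ, ContinuousOn w J ∧ (∀ x ∈ J, HasDerivWithinAt g (w x) J x) ∧
      ∀ x ∈ J, w x = (a x * derivWithin p J x) * w (p x) + (b x * derivWithin q J x) * w (q x) +
        (derivWithin a J x * g (p x) + derivWithin b J x * g (q x) + derivWithin h J x) := by
  set G : ℕ → ℝ → ℝ := iterSeq a b h p q with hG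
  set W : ℕ → ℝ → ℝ := fun n => derivWithin (G n) J with hW
  have hGC : ∀ n, ContDiffOn ℝ 1 (G n) J := iterSeq_contDiffOn hp hq hpC hqC haC hbC hhC
  have hGd : ∀ n, ∀ x ∈ J, HasDerivWithinAt (G n) (W n x) J x := fun n x hx =>
    (((hGC n).differentiableOn one_ne_zero) x hx).hasDerivWithinAt
  have hWc : ∀ n, ContinuousOn (W n) J := fun n =>
    (hGC n).continuousOn_derivWithin uJ le_rfl
  have hpd : ∀ x ∈ J, HasDerivWithinAt p (derivWithin p J x) J x := fun x hx =>
    ((hpC.differentiableOn one_ne_zero) x hx).hasDerivWithinAt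
  have hqd : ∀ x ∈ J, HasDerivWithinAt q (derivWithin q J x) J x := fun x hx =>
    ((hqC.differentiableOn one_ne_zero) x hx).hasDerivWithinAt
  have had : ∀ x ∈ J, HasDerivWithinAt a (derivWithin a J x) J x := fun x hx =>
    ((haC.differentiableOn one_ne_zero) x hx).hasDerivWithinAt
  have hbd : ∀ x ∈ J, HasDerivWithinAt b (derivWithin b J x) J x := fun x hx =>
    ((hbC.differentiableOn one_ne_zero) x hx).hasDerivWithinAt
  have hhd : ∀ x ∈ J, HasDerivWithinAt h (derivWithin h J x) J x := fun x hx =>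
    ((hhC.differentiableOn one_ne_zero) x hx).hasDerivWithinAt
  -- derivative recursion
  have hWder : ∀ n, ∀ x ∈ J, HasDerivWithinAt (G (n+1))
      ((derivWithin a J x * G n (p x) + a x * (W n (p x) * derivWithin p J x)) +
       (derivWithin b J x * G n (q x) + b x * (W n (q x) * derivWithin q J x)) +
       derivWithin h J x) J x := by
    intro n x hx
    have h1 : HasDerivWithinAt (fun y => G n (p y)) (W n (p x) * derivWithin p J x) J x :=
      (hGd n (p x) (hp hx)).comp x (hpd x hx) hp
    have h2 : HasDerivWithinAt (fun y => G n (q y)) (W n (q x) * derivWithin q J x) J x :=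
      (hGd n (q x) (hq hx)).comp x (hqd x hx) hq
    have h3 := (((had x hx).mul h1).add ((hbd x hx).mul h2)).add (hhd x hx)
    exact h3.congr (fun y _ => rfl) rfl
  have hWrec : ∀ n, ∀ x ∈ J, W (n+1) x =
      (derivWithin a J x * G n (p x) + a x * (W n (p x) * derivWithin p J x)) +
      (derivWithin b J x * G n (q x) + b x * (W n (q x) * derivWithin q J x)) +
      derivWithin h J x := fun n x hx => (hWder n x hx).derivWithin (uJ x hx)
  -- bounds
  obtain ⟨Ma, hMa⟩ : ∃ M, ∀ x ∈ J, |derivWithin a J x| ≤ M := by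
    obtain ⟨M, hM⟩ := isCompact_Icc.exists_bound_of_continuousOn
      (haC.continuousOn_derivWithin uJ le_rfl)
    exact ⟨M, fun x hx => by simpa [Real.norm_eq_abs] using hM x hx⟩
  obtain ⟨Mb, hMb⟩ : ∃ M, ∀ x ∈ J, |derivWithin b J x| ≤ M := by
    obtain ⟨M, hM⟩ := isCompact_Icc.exists_bound_of_continuousOn
      (hbC.continuousOn_derivWithin uJ le_rfl)
    exact ⟨M, fun x hx => by simpa [Real.norm_eq_abs] using hM x hx⟩
  obtain ⟨M1, hM1⟩ : ∃ M, ∀ x ∈ J, |W 1 x| ≤ M := by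
    obtain ⟨M, hM⟩ := isCompact_Icc.exists_bound_of_continuousOn (hWc 1)
    exact ⟨M, fun x hx => by simpa [Real.norm_eq_abs] using hM x hx⟩
  have h0J : (0:ℝ) ∈ J := by norm_num
  have hMa0 : 0 ≤ Ma := le_trans (abs_nonneg _) (hMa 0 h0J)
  have hMb0 : 0 ≤ Mb := le_trans (abs_nonneg _) (hMb 0 h0J)
  have hM10 : 0 ≤ M1 := le_trans (abs_nonneg _) (hM1 0 h0J)
  have hth10 : 0 ≤ th1 := le_trans (abs_nonneg _) (hth1 0 h0J)
  have hth20 : 0 ≤ th2 := le_trans (abs_nonneg _) (hth2 0 h0J)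
  have hDel : ∀ n, ∀ x ∈ J, |G (n+1) x - G n x| ≤ 2*C * r ^ n := by
    intro n x hx
    have h1 := hconv (n+1) x hx
    have h2 := hconv n x hx
    have h3 : C * r ^ (n+1) ≤ C * r ^ n := by
      have : r ^ (n+1) ≤ r ^ n := pow_le_pow_of_le_one hr0 hr1.le (Nat.le_succ n)
      exact mul_le_mul_of_nonneg_left this hC0
    calc |G (n+1) x - G n x| = |(G (n+1) x - g x) - (G n x - g x)| := by ring_nf
      _ ≤ |G (n+1) x - g x| + |G n x - g x| := abs_sub _ _
      _ ≤ C * r ^ n + C * r ^ n := add_le_add (le_trans h1 h3) h2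
      _ = 2*C * r ^ n := by ring
  set th : ℝ := th1 + th2 with hthdef
  set t : ℝ := (1 + max r th)/2 with htdef
  have hmax1 : max r th < 1 := max_lt hr1 hth
  have hmax0 : 0 ≤ max r th := le_trans hr0 (le_max_left _ _)
  have ht1 : t < 1 := by rw [htdef]; linarith
  have htθ : th < t := by
    rw [htdef]
    have := le_max_right r th
    linarith
  have htr : r ≤ t := by
    rw [htdef]
    have := le_max_left r th
    linarith
  have ht0 : 0 ≤ t := by rw [htdef]; linarith
  set c : ℝ := (Ma + Mb) * (2*C) with hcdef
  have hc0 : 0 ≤ c := by positivity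
  set D : ℝ := max M1 (c/(t-th)) with hDdef
  have htth : 0 < t - th := by linarith
  have hD0 : 0 ≤ D := le_trans hM10 (le_max_left _ _)
  have hcD : c ≤ D*(t-th) := by
    have : c/(t-th) ≤ D := le_max_right _ _
    calc c = (c/(t-th))*(t-th) := by field_simp
      _ ≤ D*(t-th) := mul_le_mul_of_nonneg_right this htth.le
  -- geometric bound on successive derivative differences
  have hWd : ∀ n, ∀ x ∈ J, |W (n+1) x - W n x| ≤ D * t ^ n := by
    intro n
    induction n with
    | zero =>
      intro x hx
      have hW0 : W 0 x = 0 := congrFun (derivWithin_const _ _) x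
      rw [hW0]
      have h1 : |W 1 x - 0| ≤ D := by
        rw [sub_zero]; exact le_trans (hM1 x hx) (le_max_left _ _)
      simpa using h1
    | succ n ih =>
      intro x hx
      have e : W (n+2) x - W (n+1) x =
          derivWithin a J x * (G (n+1) (p x) - G n (p x)) +
          (a x * derivWithin p J x) * (W (n+1) (p x) - W n (p x)) +
          derivWithin b J x * (G (n+1) (q x) - G n (q x)) +
          (b x * derivWithin q J x) * (W (n+1) (q x) - W n (q x)) := by
        rw [hWrec (n+1) x hx, hWrec n x hx]; ring
      rw [e]
      have b1 : |derivWithin a J x * (G (n+1) (p x) - G n (p x))| ≤ Ma * (2*C*r^n) := by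
        rw [abs_mul]
        exact mul_le_mul (hMa x hx) (hDel n (p x) (hp hx)) (abs_nonneg _) hMa0
      have b2 : |(a x * derivWithin p J x) * (W (n+1) (p x) - W n (p x))| ≤ th1 * (D * t^n) := by
        rw [abs_mul]
        exact mul_le_mul (hth1 x hx) (ih (p x) (hp hx)) (abs_nonneg _) hth10
      have b3 : |derivWithin b J x * (G (n+1) (q x) - G n (q x))| ≤ Mb * (2*C*r^n) := by
        rw [abs_mul]
        exact mul_le_mul (hMb x hx) (hDel n (q x) (hq hx)) (abs_nonneg _) hMb0
      have b4 : |(b x * derivWithin q J x) * (W (n+1) (q x) - W n (q x))| ≤ th2 * (D * t^n) := by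
        rw [abs_mul]
        exact mul_le_mul (hth2 x hx) (ih (q x) (hq hx)) (abs_nonneg _) hth20
      have habs : |derivWithin a J x * (G (n+1) (p x) - G n (p x)) +
          (a x * derivWithin p J x) * (W (n+1) (p x) - W n (p x)) +
          derivWithin b J x * (G (n+1) (q x) - G n (q x)) +
          (b x * derivWithin q J x) * (W (n+1) (q x) - W n (q x))| ≤
          Ma * (2*C*r^n) + th1 * (D * t^n) + Mb * (2*C*r^n) + th2 * (D * t^n) := by
        calc _ ≤ |derivWithin a J x * (G (n+1) (p x) - G n (p x)) +
              (a x * derivWithin p J x) * (W (n+1) (p x) - W n (p x)) +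
              derivWithin b J x * (G (n+1) (q x) - G n (q x))| +
              |(b x * derivWithin q J x) * (W (n+1) (q x) - W n (q x))| := abs_add_le _ _
          _ ≤ (|derivWithin a J x * (G (n+1) (p x) - G n (p x)) +
              (a x * derivWithin p J x) * (W (n+1) (p x) - W n (p x))| +
              |derivWithin b J x * (G (n+1) (q x) - G n (q x))|) +
              |(b x * derivWithin q J x) * (W (n+1) (q x) - W n (q x))| :=
              add_le_add_left (abs_add_le _ _) _
          _ ≤ ((|derivWithin a J x * (G (n+1) (p x) - G n (p x))| +
              |(a x * derivWithin p J x) * (W (n+1) (p x) - W n (p x))|) +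
              |derivWithin b J x * (G (n+1) (q x) - G n (q x))|) +
              |(b x * derivWithin q J x) * (W (n+1) (q x) - W n (q x))| :=
              add_le_add_left (add_le_add_left (abs_add_le _ _) _) _
          _ ≤ Ma * (2*C*r^n) + th1 * (D * t^n) + Mb * (2*C*r^n) + th2 * (D * t^n) := by
              exact add_le_add (add_le_add (add_le_add b1 b2) b3) b4
      refine le_trans habs ?_
      have hrt : r ^ n ≤ t ^ n := pow_le_pow_left₀ hr0 htr n
      have htn : (0:ℝ) ≤ t ^ n := pow_nonneg ht0 n
      have key : (Ma + Mb) * (2*C) * r^n + th * (D * t^n) ≤ D * t^(n+1) := by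
        have h1 : (Ma + Mb) * (2*C) * r^n ≤ c * t^n := by
          rw [hcdef]
          exact mul_le_mul_of_nonneg_left hrt (by positivity)
        have h2 : c * t^n + th * (D * t^n) = (c + th*D) * t^n := by ring
        have h3 : (c + th*D) * t^n ≤ (D*t) * t^n := by
          apply mul_le_mul_of_nonneg_right _ htn
          nlinarith
        calc (Ma + Mb) * (2*C) * r^n + th * (D * t^n) ≤ c * t^n + th * (D * t^n) := by linarith
          _ = (c + th*D) * t^n := h2
          _ ≤ (D*t) * t^n := h3
          _ = D * t^(n+1) := by ring
      calc Ma * (2*C*r^n) + th1 * (D * t^n) + Mb * (2*C*r^n) + th2 * (D * t^n)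
          = (Ma + Mb) * (2*C) * r^n + th * (D * t^n) := by rw [hthdef]; ring
        _ ≤ D * t^(n+1) := key
  -- the limit w of the derivatives
  have hcauchy : ∀ x ∈ J, CauchySeq (fun n => W n x) := by
    intro x hx
    apply cauchySeq_of_le_geometric t D ht1
    intro n
    rw [Real.dist_eq, abs_sub_comm]
    exact hWd n x hx
  set w : ℝ → ℝ := fun x => limUnder atTop (fun n => W n x) with hwdef
  have htend : ∀ x ∈ J, Tendsto (fun n => W n x) atTop (𝓝 (w x)) := by
    intro x hx
    obtain ⟨l, hl⟩ := cauchySeq_tendsto_of_complete (hcauchy x hx)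
    have : w x = l := hl.limUnder_eq
    rw [this]; exact hl
  have htail : ∀ n, ∀ x ∈ J, |W n x - w x| ≤ D * t ^ n / (1 - t) := by
    intro n x hx
    have := dist_le_of_le_geometric_of_tendsto t D ht1
      (fun k => by rw [Real.dist_eq, abs_sub_comm]; exact hWd k x hx) (htend x hx) n
    rwa [Real.dist_eq] at this
  have hbound0 : Tendsto (fun n : ℕ => D / (1-t) * t ^ n) atTop (𝓝 0) := by
    have := (tendsto_pow_atTop_nhds_zero_of_lt_one ht0 ht1).const_mul (D/(1-t))
    simpa using this
  have hTU : TendstoUniformlyOn W w atTop J := by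
    rw [Metric.tendstoUniformlyOn_iff]
    intro ε hε
    filter_upwards [hbound0.eventually (gt_mem_nhds hε)] with n hn x hx
    have h1 : dist (w x) (W n x) = |W n x - w x| := by
      rw [dist_comm, Real.dist_eq]
    rw [h1]
    calc |W n x - w x| ≤ D * t ^ n / (1 - t) := htail n x hx
      _ = D / (1-t) * t ^ n := by ring
      _ < ε := hn
  have hwc : ContinuousOn w J := hTU.continuousOn (Eventually.of_forall hWc).frequently
  -- fundamental theorem of calculus for the iterates
  have hFTC : ∀ n, ∀ x ∈ J, G n x - G n 0 = ∫ s in (0:ℝ)..x, W n s := by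
    intro n x hx
    have h0x : (0:ℝ) ≤ x := hx.1
    have hsub : Icc (0:ℝ) x ⊆ J := Icc_subset_Icc le_rfl hx.2
    have hder : ∀ y ∈ Ioo (0:ℝ) x, HasDerivWithinAt (G n) (W n y) (Ioi y) y := by
      intro y hy
      have hyJ : y ∈ J := ⟨hy.1.le, (hy.2.le.trans hx.2)⟩
      refine (hGd n y hyJ).mono_of_mem_nhdsWithin ?_
      have hy1 : y < 1 := lt_of_lt_of_le hy.2 hx.2
      have hmem : Ioo y 1 ∈ 𝓝[Ioi y] y := by
        rw [show Ioo y 1 = Ioi y ∩ Iio 1 from rfl]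
        exact inter_mem self_mem_nhdsWithin (mem_nhdsWithin_of_mem_nhds (Iio_mem_nhds hy1))
      exact mem_of_superset hmem (fun z hz => ⟨(hy.1.trans hz.1).le, hz.2.le⟩)
    have hcont : ContinuousOn (G n) (Icc 0 x) := ((hGC n).continuousOn).mono hsub
    have hiw : IntervalIntegrable (W n) volume 0 x := by
      apply ContinuousOn.intervalIntegrable
      rw [uIcc_of_le h0x]
      exact (hWc n).mono hsub
    have := intervalIntegral.integral_eq_sub_of_hasDeriv_right_of_le h0x hcont hder hiw
    linarith [this]
  -- integrate the limit
  have hwint : ∀ x ∈ J, IntervalIntegrable w volume 0 x := by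
    intro x hx
    apply ContinuousOn.intervalIntegrable
    rw [uIcc_of_le hx.1]
    exact hwc.mono (Icc_subset_Icc le_rfl hx.2)
  have hGlim : ∀ x ∈ J, Tendsto (fun n => G n x) atTop (𝓝 (g x)) := by
    intro x hx
    have h1 : Tendsto (fun n => G n x - g x) atTop (𝓝 0) := by
      apply squeeze_zero_norm (fun n => by simpa [Real.norm_eq_abs] using hconv n x hx)
      have := (tendsto_pow_atTop_nhds_zero_of_lt_one hr0 hr1).const_mul C
      simpa using this
    have := h1.add_const (g x)
    simpa using this
  have hgint : ∀ x ∈ J, g x - g 0 = ∫ s in (0:ℝ)..x, w s := by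
    intro x hx
    have hL : Tendsto (fun n => G n x - G n 0) atTop (𝓝 (g x - g 0)) :=
      (hGlim x hx).sub (hGlim 0 h0J)
    have hIn : ∀ n, IntervalIntegrable (W n) volume 0 x := by
      intro n
      apply ContinuousOn.intervalIntegrable
      rw [uIcc_of_le hx.1]
      exact (hWc n).mono (Icc_subset_Icc le_rfl hx.2)
    have hR : Tendsto (fun n => ∫ s in (0:ℝ)..x, W n s) atTop (𝓝 (∫ s in (0:ℝ)..x, w s)) := by
      have hdiff : Tendsto (fun n => (∫ s in (0:ℝ)..x, W n s) - ∫ s in (0:ℝ)..x, w s)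
          atTop (𝓝 0) := by
        apply squeeze_zero_norm (a := fun n => D * t ^ n / (1-t) * |x - 0|)
        · intro n
          rw [← intervalIntegral.integral_sub (hIn n) (hwint x hx)]
          apply intervalIntegral.norm_integral_le_of_norm_le_const
          intro y hy
          have hyJ : y ∈ J := by
            rw [uIoc_of_le hx.1] at hy
            exact ⟨hy.1.le, hy.2.trans hx.2⟩
          simpa [Real.norm_eq_abs] using htail n y hyJ
        · have h2 : Tendsto (fun n : ℕ => D / (1-t) * |x - 0| * t ^ n) atTop (𝓝 0) := by
            have := (tendsto_pow_atTop_nhds_zero_of_lt_one ht0 ht1).const_mul (D/(1-t) * |x - 0|)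
            simpa using this
          apply h2.congr
          intro n; ring
      have := hdiff.add_const (∫ s in (0:ℝ)..x, w s)
      simpa using this
    have hL' : Tendsto (fun n => ∫ s in (0:ℝ)..x, W n s) atTop (𝓝 (g x - g 0)) := by
      apply hL.congr
      intro n
      exact hFTC n x hx
    exact tendsto_nhds_unique hL' hR
  -- g has derivative w within J
  have hgd : ∀ x ∈ J, HasDerivWithinAt g (w x) J x := by
    intro x hx
    haveI : Fact (x ∈ Icc (0:ℝ) 1) := ⟨hx⟩
    have hmeas : StronglyMeasurableAtFilter w (𝓝[J] x) volume :=
      hwc.stronglyMeasurableAtFilter_nhdsWithin measurableSet_Icc x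
    have hF : HasDerivWithinAt (fun u => ∫ s in (0:ℝ)..u, w s) (w x) J x :=
      intervalIntegral.integral_hasDerivWithinAt_right (hwint x hx) hmeas (hwc x hx)
    have hF' : HasDerivWithinAt (fun u => g 0 + ∫ s in (0:ℝ)..u, w s) (w x) J x :=
      hF.const_add (g 0)
    refine hF'.congr (fun y hy => ?_) ?_
    · have := hgint y hy; linarith
    · have := hgint x hx; linarith
  -- the equation satisfied by w
  refine ⟨w, hwc, hgd, ?_⟩
  intro x hx
  have hL : Tendsto (fun n => W (n+1) x) atTop (𝓝 (w x)) :=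
    (htend x hx).comp (tendsto_add_atTop_nat 1)
  have hR : Tendsto (fun n =>
      (derivWithin a J x * G n (p x) + a x * (W n (p x) * derivWithin p J x)) +
      (derivWithin b J x * G n (q x) + b x * (W n (q x) * derivWithin q J x)) +
      derivWithin h J x) atTop (𝓝
      ((derivWithin a J x * g (p x) + a x * (w (p x) * derivWithin p J x)) +
      (derivWithin b J x * g (q x) + b x * (w (q x) * derivWithin q J x)) +
      derivWithin h J x)) := by
    have t1 := (hGlim (p x) (hp hx)).const_mul (derivWithin a J x)
    have t2 := ((htend (p x) (hp hx)).mul_const (derivWithin p J x)).const_mul (a x)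
    have t3 := (hGlim (q x) (hq hx)).const_mul (derivWithin b J x)
    have t4 := ((htend (q x) (hq hx)).mul_const (derivWithin q J x)).const_mul (b x)
    exact ((t1.add t2).add (t3.add t4)).add_const (derivWithin h J x)
  have hL' : Tendsto (fun n => W (n+1) x) atTop (𝓝
      ((derivWithin a J x * g (p x) + a x * (w (p x) * derivWithin p J x)) +
      (derivWithin b J x * g (q x) + b x * (w (q x) * derivWithin q J x)) +
      derivWithin h J x)) := by
    apply hR.congr
    intro n
    exact (hWrec n x hx).symm
  have := tendsto_nhds_unique hL hL'
  rw [this]; ring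

lemma key : ∀ (n : ℕ) (p q a b h g : ℝ → ℝ) (al be : ℝ),
    MapsTo p J J → MapsTo q J J →
    ContDiffOn ℝ n p J → ContDiffOn ℝ n q J → ContDiffOn ℝ n a J → ContDiffOn ℝ n b J →
    ContDiffOn ℝ n h J →
    (∀ x ∈ J, |a x| ≤ al) → (∀ x ∈ J, |b x| ≤ be) → (al + be < 1) →
    (∀ x ∈ J, |derivWithin p J x| ≤ 1) → (∀ x ∈ J, |derivWithin q J x| ≤ 1) →
    ContinuousOn g J → (∀ x ∈ J, g x = a x * g (p x) + b x * g (q x) + h x) →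
    ContDiffOn ℝ n g J := by
  intro n
  induction n with
  | zero =>
    intro p q a b h g al be _ _ _ _ _ _ _ _ _ _ _ _ hgc _
    exact contDiffOn_zero.2 hgc
  | succ n ih =>
    intro p q a b h g al be hp hq hpC hqC haC hbC hhC ha hb hab hp1 hq1 hgc hgeq
    have hcast : ((n+1 : ℕ) : WithTop ℕ∞) = (n : WithTop ℕ∞) + 1 := by push_cast; rfl
    have hnle : ((n : ℕ) : WithTop ℕ∞) ≤ ((n+1 : ℕ) : WithTop ℕ∞) := by
      exact_mod_cast Nat.le_succ n
    have h1le : (1 : WithTop ℕ∞) ≤ ((n+1 : ℕ) : WithTop ℕ∞) := by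
      exact_mod_cast Nat.succ_le_succ (Nat.zero_le n)
    have h0J : (0:ℝ) ∈ J := by norm_num
    have hal0 : 0 ≤ al := le_trans (abs_nonneg _) (ha 0 h0J)
    have hbe0 : 0 ≤ be := le_trans (abs_nonneg _) (hb 0 h0J)
    -- g is C^n by the inductive hypothesis
    have hgn : ContDiffOn ℝ n g J := ih p q a b h g al be hp hq (hpC.of_le hnle)
      (hqC.of_le hnle) (haC.of_le hnle) (hbC.of_le hnle) (hhC.of_le hnle)
      ha hb hab hp1 hq1 hgc hgeq
    -- bound on g
    obtain ⟨Mg, hMg⟩ : ∃ M, ∀ x ∈ J, |g x| ≤ M := by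
      obtain ⟨M, hM⟩ := isCompact_Icc.exists_bound_of_continuousOn hgc
      exact ⟨M, fun x hx => by simpa [Real.norm_eq_abs] using hM x hx⟩
    have hMg0 : 0 ≤ Mg := le_trans (abs_nonneg _) (hMg 0 h0J)
    have hconv := iterSeq_conv hp hq ha hb hMg hgeq
    -- contraction bounds at the derivative level
    have hth1 : ∀ x ∈ J, |a x * derivWithin p J x| ≤ al := by
      intro x hx
      rw [abs_mul]
      calc |a x| * |derivWithin p J x| ≤ al * 1 :=
        mul_le_mul (ha x hx) (hp1 x hx) (abs_nonneg _) hal0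
        _ = al := mul_one al
    have hth2 : ∀ x ∈ J, |b x * derivWithin q J x| ≤ be := by
      intro x hx
      rw [abs_mul]
      calc |b x| * |derivWithin q J x| ≤ be * 1 :=
        mul_le_mul (hb x hx) (hq1 x hx) (abs_nonneg _) hbe0
        _ = be := mul_one be
    obtain ⟨w, hwc, hgd, hweq⟩ := C1step hp hq (hpC.of_le h1le) (hqC.of_le h1le)
      (haC.of_le h1le) (hbC.of_le h1le) (hhC.of_le h1le) hth1 hth2 hab
      (by linarith : (0:ℝ) ≤ al + be) hab hMg0 hconv hgc
    have hdg : ∀ x ∈ J, derivWithin g J x = w x := fun x hx => (hgd x hx).derivWithin (uJ x hx)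
    -- the derivative data is C^n
    have hpd : ContDiffOn ℝ n (derivWithin p J) J :=
      hpC.derivWithin uJ (le_of_eq hcast.symm)
    have hqd : ContDiffOn ℝ n (derivWithin q J) J :=
      hqC.derivWithin uJ (le_of_eq hcast.symm)
    have had : ContDiffOn ℝ n (derivWithin a J) J :=
      haC.derivWithin uJ (le_of_eq hcast.symm)
    have hbd : ContDiffOn ℝ n (derivWithin b J) J :=
      hbC.derivWithin uJ (le_of_eq hcast.symm)
    have hhd : ContDiffOn ℝ n (derivWithin h J) J :=
      hhC.derivWithin uJ (le_of_eq hcast.symm)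
    have hA : ContDiffOn ℝ n (fun x => a x * derivWithin p J x) J := (haC.of_le hnle).mul hpd
    have hB : ContDiffOn ℝ n (fun x => b x * derivWithin q J x) J := (hbC.of_le hnle).mul hqd
    have hH : ContDiffOn ℝ n (fun x =>
        derivWithin a J x * g (p x) + derivWithin b J x * g (q x) + derivWithin h J x) J := by
      refine ContDiffOn.add (ContDiffOn.add ?_ ?_) hhd
      · exact had.mul (hgn.comp (hpC.of_le hnle) hp)
      · exact hbd.mul (hgn.comp (hqC.of_le hnle) hq)
    -- apply the inductive hypothesis to w
    have hwn : ContDiffOn ℝ n w J := by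
      refine ih p q (fun x => a x * derivWithin p J x) (fun x => b x * derivWithin q J x)
        (fun x => derivWithin a J x * g (p x) + derivWithin b J x * g (q x) + derivWithin h J x)
        w al be hp hq (hpC.of_le hnle) (hqC.of_le hnle) hA hB hH hth1 hth2 hab hp1 hq1 hwc ?_
      intro x hx
      simpa using hweq x hx
    rw [hcast, contDiffOn_succ_iff_derivWithin uJ]
    refine ⟨fun x hx => (hgd x hx).differentiableWithinAt, ?_, hwn.congr hdg⟩
    intro hω
    exact absurd hω (by simp)

lemma uIter_conv {φ φ₁ φ₂ f u : ℝ → ℝ} {L L1 L2 K0 : ℝ}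
    (hφr : ∀ x ∈ J, ∀ y ∈ J, |φ x - φ y| ≤ L * |x - y|)
    (hφ₁r : ∀ x ∈ J, ∀ y ∈ J, |φ₁ x - φ₁ y| ≤ L1 * |x - y|)
    (hφ₂r : ∀ x ∈ J, ∀ y ∈ J, |φ₂ x - φ₂ y| ≤ L2 * |x - y|)
    (hur : ∀ x ∈ J, ∀ y ∈ J, |u x - u y| ≤ K0 * |x - y|)
    (hφ0 : φ 0 = 0) (hφ1 : φ 1 = 1) (hφ₁1 : φ₁ 1 = 1) (hφ₂0 : φ₂ 0 = 0)
    (hφmem : ∀ x ∈ J, φ x ∈ J) (hp : MapsTo φ₁ J J) (hq : MapsTo φ₂ J J)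
    (hf0 : f 0 = 0) (hf1 : f 1 = 0) (hu0 : u 0 = 0) (hu1 : u 1 = 0)
    (heq : ∀ x ∈ J, u x = φ x * u (φ₁ x) + (1 - φ x) * u (φ₂ x) + f x)
    (hK0 : 0 ≤ K0) (hL0 : 0 ≤ L) (hL10 : 0 ≤ L1) (hL20 : 0 ≤ L2) :
    ∀ n, ∀ x ∈ J, |iterSeq φ (fun y => 1 - φ y) f φ₁ φ₂ n x - u x| ≤
      K0 * ((1+L)*(L1+L2))^n := by
  set G : ℕ → ℝ → ℝ := iterSeq φ (fun y => 1 - φ y) f φ₁ φ₂ with hG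
  set ρ : ℝ := (1+L)*(L1+L2) with hρ
  have hρ0 : 0 ≤ ρ := by positivity
  have h0J : (0:ℝ) ∈ J := by norm_num
  have h1J : (1:ℝ) ∈ J := by norm_num
  -- the iterates vanish at the endpoints
  have hend : ∀ n, G n 0 = 0 ∧ G n 1 = 0 := by
    intro n
    induction n with
    | zero => exact ⟨rfl, rfl⟩
    | succ n ih =>
      constructor
      · show φ 0 * G n (φ₁ 0) + (1 - φ 0) * G n (φ₂ 0) + f 0 = 0
        rw [hφ0, hφ₂0, ih.1, hf0]; ring
      · show φ 1 * G n (φ₁ 1) + (1 - φ 1) * G n (φ₂ 1) + f 1 = 0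
        rw [hφ1, hφ₁1, ih.2, hf1]; ring
  -- Lipschitz decay of the differences
  have hlip : ∀ n, ∀ x ∈ J, ∀ y ∈ J, |(G n x - u x) - (G n y - u y)| ≤ K0 * ρ^n * |x - y| := by
    intro n
    induction n with
    | zero =>
      intro x hx y hy
      have : |(G 0 x - u x) - (G 0 y - u y)| = |u x - u y| := by
        show |((0:ℝ) - u x) - ((0:ℝ) - u y)| = _
        rw [show ((0:ℝ) - u x) - ((0:ℝ) - u y) = -(u x - u y) by ring, abs_neg]
      rw [this]
      simpa using hur x hx y hy
    | succ n ih =>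
      intro x hx y hy
      have hd : ∀ z ∈ J, G (n+1) z - u z =
          φ z * (G n (φ₁ z) - u (φ₁ z)) + (1 - φ z) * (G n (φ₂ z) - u (φ₂ z)) := by
        intro z hz
        have h1 : G (n+1) z = φ z * G n (φ₁ z) + (1 - φ z) * G n (φ₂ z) + f z := rfl
        rw [h1, heq z hz]; ring
      have e : (G (n+1) x - u x) - (G (n+1) y - u y) =
          φ x * ((G n (φ₁ x) - u (φ₁ x)) - (G n (φ₁ y) - u (φ₁ y))) +
          (1 - φ x) * ((G n (φ₂ x) - u (φ₂ x)) - (G n (φ₂ y) - u (φ₂ y))) +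
          (φ x - φ y) * ((G n (φ₁ y) - u (φ₁ y)) - (G n (φ₂ y) - u (φ₂ y))) := by
        rw [hd x hx, hd y hy]; ring
      have hKρ : (0:ℝ) ≤ K0 * ρ^n := by positivity
      have t1 : |(G n (φ₁ x) - u (φ₁ x)) - (G n (φ₁ y) - u (φ₁ y))| ≤
          K0 * ρ^n * (L1 * |x - y|) := by
        refine le_trans (ih (φ₁ x) (hp hx) (φ₁ y) (hp hy)) ?_
        exact mul_le_mul_of_nonneg_left (hφ₁r x hx y hy) hKρ
      have t2 : |(G n (φ₂ x) - u (φ₂ x)) - (G n (φ₂ y) - u (φ₂ y))| ≤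
          K0 * ρ^n * (L2 * |x - y|) := by
        refine le_trans (ih (φ₂ x) (hq hx) (φ₂ y) (hq hy)) ?_
        exact mul_le_mul_of_nonneg_left (hφ₂r x hx y hy) hKρ
      have t3 : |(G n (φ₁ y) - u (φ₁ y)) - (G n (φ₂ y) - u (φ₂ y))| ≤ K0 * ρ^n * (L1 + L2) := by
        have e1 : |G n (φ₁ y) - u (φ₁ y)| ≤ K0 * ρ^n * L1 := by
          have h1 : G n 1 - u 1 = 0 := by rw [(hend n).2, hu1]; ring
          have := ih (φ₁ y) (hp hy) 1 h1J
          rw [h1, sub_zero] at this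
          refine le_trans this ?_
          have hb : |φ₁ y - 1| ≤ L1 := by
            have := hφ₁r y hy 1 h1J
            rw [hφ₁1] at this
            refine le_trans this ?_
            have : |y - 1| ≤ 1 := by
              rw [abs_sub_comm, abs_of_nonneg (by linarith [hy.2] : (0:ℝ) ≤ 1 - y)]
              linarith [hy.1]
            nlinarith
          exact mul_le_mul_of_nonneg_left hb hKρ
        have e2 : |G n (φ₂ y) - u (φ₂ y)| ≤ K0 * ρ^n * L2 := by
          have h0 : G n 0 - u 0 = 0 := by rw [(hend n).1, hu0]; ring
          have := ih (φ₂ y) (hq hy) 0 h0J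
          rw [h0, sub_zero] at this
          refine le_trans this ?_
          have hb : |φ₂ y - 0| ≤ L2 := by
            have := hφ₂r y hy 0 h0J
            rw [hφ₂0] at this
            refine le_trans this ?_
            have : |y - 0| ≤ 1 := by
              rw [sub_zero, abs_of_nonneg hy.1]; exact hy.2
            nlinarith
          have : |φ₂ y| ≤ L2 := by simpa using hb
          simpa using mul_le_mul_of_nonneg_left this hKρ
        calc |(G n (φ₁ y) - u (φ₁ y)) - (G n (φ₂ y) - u (φ₂ y))| ≤
            |G n (φ₁ y) - u (φ₁ y)| + |G n (φ₂ y) - u (φ₂ y)| := abs_sub _ _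
          _ ≤ K0 * ρ^n * L1 + K0 * ρ^n * L2 := add_le_add e1 e2
          _ = K0 * ρ^n * (L1 + L2) := by ring
      have hφx : |φ x| ≤ 1 := by
        have := hφmem x hx
        rw [abs_of_nonneg this.1]; exact this.2
      have hφx' : |1 - φ x| ≤ 1 := by
        have := hφmem x hx
        rw [abs_of_nonneg (by linarith [this.2] : (0:ℝ) ≤ 1 - φ x)]
        linarith [this.1]
      have hφxy : |φ x - φ y| ≤ L * |x - y| := hφr x hx y hy
      rw [e]
      have habs : |φ x * ((G n (φ₁ x) - u (φ₁ x)) - (G n (φ₁ y) - u (φ₁ y))) +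
          (1 - φ x) * ((G n (φ₂ x) - u (φ₂ x)) - (G n (φ₂ y) - u (φ₂ y))) +
          (φ x - φ y) * ((G n (φ₁ y) - u (φ₁ y)) - (G n (φ₂ y) - u (φ₂ y)))| ≤
          |φ x| * |(G n (φ₁ x) - u (φ₁ x)) - (G n (φ₁ y) - u (φ₁ y))| +
          |1 - φ x| * |(G n (φ₂ x) - u (φ₂ x)) - (G n (φ₂ y) - u (φ₂ y))| +
          |φ x - φ y| * |(G n (φ₁ y) - u (φ₁ y)) - (G n (φ₂ y) - u (φ₂ y))| := by
        refine le_trans (abs_add_le _ _) ?_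
        refine add_le_add (le_trans (abs_add_le _ _) ?_) (le_of_eq (abs_mul _ _))
        exact add_le_add (le_of_eq (abs_mul _ _)) (le_of_eq (abs_mul _ _))
      refine le_trans habs ?_
      have c1 : |φ x| * |(G n (φ₁ x) - u (φ₁ x)) - (G n (φ₁ y) - u (φ₁ y))| ≤
          K0 * ρ^n * (L1 * |x - y|) := by
        calc _ ≤ 1 * |(G n (φ₁ x) - u (φ₁ x)) - (G n (φ₁ y) - u (φ₁ y))| :=
              mul_le_mul_of_nonneg_right hφx (abs_nonneg _)
          _ = |(G n (φ₁ x) - u (φ₁ x)) - (G n (φ₁ y) - u (φ₁ y))| := one_mul _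
          _ ≤ _ := t1
      have c2 : |1 - φ x| * |(G n (φ₂ x) - u (φ₂ x)) - (G n (φ₂ y) - u (φ₂ y))| ≤
          K0 * ρ^n * (L2 * |x - y|) := by
        calc _ ≤ 1 * |(G n (φ₂ x) - u (φ₂ x)) - (G n (φ₂ y) - u (φ₂ y))| :=
              mul_le_mul_of_nonneg_right hφx' (abs_nonneg _)
          _ = |(G n (φ₂ x) - u (φ₂ x)) - (G n (φ₂ y) - u (φ₂ y))| := one_mul _
          _ ≤ _ := t2
      have c3 : |φ x - φ y| * |(G n (φ₁ y) - u (φ₁ y)) - (G n (φ₂ y) - u (φ₂ y))| ≤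
          (L * |x - y|) * (K0 * ρ^n * (L1 + L2)) :=
        mul_le_mul hφxy t3 (abs_nonneg _) (by positivity)
      calc _ ≤ K0 * ρ^n * (L1 * |x - y|) + K0 * ρ^n * (L2 * |x - y|) +
            (L * |x - y|) * (K0 * ρ^n * (L1 + L2)) := add_le_add (add_le_add c1 c2) c3
        _ = K0 * (ρ^n * ((1+L)*(L1+L2))) * |x - y| := by ring
        _ = K0 * ρ^(n+1) * |x - y| := by rw [hρ]; ring
  intro n x hx
  have h0 : G n 0 - u 0 = 0 := by rw [(hend n).1, hu0]; ring
  have := hlip n x hx 0 h0J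
  rw [h0, sub_zero] at this
  refine le_trans this ?_
  have hx1 : |x - 0| ≤ 1 := by rw [sub_zero, abs_of_nonneg hx.1]; exact hx.2
  have hKρ : (0:ℝ) ≤ K0 * ρ^n := by positivity
  nlinarith

end Reg

/-- Regularity: if `φ₁, φ₂ ∈ C^m[0,1]`, `φ, f ∈ C^{m+1}[0,1]` satisfy assumption (A)
together with the contraction condition, then the solution `u ∈ H₀¹[0,1]` of the
functional equation belongs to `C^m[0,1]`. -/
theorem regularity (m : ℕ) (hm : 1 ≤ m) (φ φ₁ φ₂ f u : ℝ → ℝ)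
    (hφ : IsLipOn01 φ) (hφ0 : φ 0 = 0) (hφ1 : φ 1 = 1)
    (hφmem : ∀ x ∈ Icc (0:ℝ) 1, φ x ∈ Icc (0:ℝ) 1)
    (hφ₁ : IsLipOn01 φ₁) (hφ₁1 : φ₁ 1 = 1)
    (hφ₁mem : ∀ x ∈ Icc (0:ℝ) 1, φ₁ x ∈ Icc (0:ℝ) 1)
    (hφ₂ : IsLipOn01 φ₂) (hφ₂0 : φ₂ 0 = 0)
    (hφ₂mem : ∀ x ∈ Icc (0:ℝ) 1, φ₂ x ∈ Icc (0:ℝ) 1)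
    (hf : MemH01 f)
    (hφ₁smooth : ContDiffOn ℝ m φ₁ (Icc (0:ℝ) 1))
    (hφ₂smooth : ContDiffOn ℝ m φ₂ (Icc (0:ℝ) 1))
    (hφsmooth : ContDiffOn ℝ (m + 1) φ (Icc (0:ℝ) 1))
    (hfsmooth : ContDiffOn ℝ (m + 1) f (Icc (0:ℝ) 1))
    (hcontr : (1 + lipSemi φ) * (lipSemi φ₁ + lipSemi φ₂) < 1)
    (hu : MemH01 u)
    (heq : ∀ x ∈ Icc (0:ℝ) 1, u x = φ x * u (φ₁ x) + (1 - φ x) * u (φ₂ x) + f x) :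
    ContDiffOn ℝ m u (Icc (0:ℝ) 1) := by
  have hm1 : (1 : WithTop ℕ∞) ≤ (m : WithTop ℕ∞) := by exact_mod_cast hm
  have hφr := Reg.lip_ratio hφ
  have hφ₁r := Reg.lip_ratio hφ₁
  have hφ₂r := Reg.lip_ratio hφ₂
  have hur := Reg.lip_ratio hu.1
  have hL1 : 1 ≤ lipSemi φ := Reg.one_le_lipSemi hφ hφ0 hφ1
  have hL10 : 0 ≤ lipSemi φ₁ := Reg.lipSemi_nonneg hφ₁
  have hL20 : 0 ≤ lipSemi φ₂ := Reg.lipSemi_nonneg hφ₂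
  have hK00 : 0 ≤ lipSemi u := Reg.lipSemi_nonneg hu.1
  have hρ1 : (1 + lipSemi φ) * (lipSemi φ₁ + lipSemi φ₂) < 1 := hcontr
  have hρ0 : 0 ≤ (1 + lipSemi φ) * (lipSemi φ₁ + lipSemi φ₂) :=
    mul_nonneg (by linarith) (by linarith)
  have hL12 : lipSemi φ₁ + lipSemi φ₂ < 1 := by nlinarith
  have hL1le1 : lipSemi φ₁ ≤ 1 := by linarith
  have hL2le1 : lipSemi φ₂ ≤ 1 := by linarith
  have hp : MapsTo φ₁ Reg.J Reg.J := fun x hx => hφ₁mem x hx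
  have hq : MapsTo φ₂ Reg.J Reg.J := fun x hx => hφ₂mem x hx
  have hucont : ContinuousOn u Reg.J := by
    obtain ⟨K, hK⟩ := hu.1
    exact hK.continuousOn
  have huconv := Reg.uIter_conv hφr hφ₁r hφ₂r hur hφ0 hφ1 hφ₁1 hφ₂0 hφmem hp hq
    hf.2.1 hf.2.2 hu.2.1 hu.2.2 heq hK00 (by linarith) hL10 hL20
  have hd1 : ∀ x ∈ Reg.J, |derivWithin φ₁ Reg.J x| ≤ lipSemi φ₁ := fun x hx =>
    Reg.abs_derivWithin_le hφ₁r hx ((hφ₁smooth.differentiableOn (zero_lt_one.trans_le hm1).ne' x hx).hasDerivWithinAt)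
  have hd2 : ∀ x ∈ Reg.J, |derivWithin φ₂ Reg.J x| ≤ lipSemi φ₂ := fun x hx =>
    Reg.abs_derivWithin_le hφ₂r hx ((hφ₂smooth.differentiableOn (zero_lt_one.trans_le hm1).ne' x hx).hasDerivWithinAt)
  have hφabs : ∀ x ∈ Reg.J, |φ x| ≤ 1 := by
    intro x hx
    have := hφmem x hx
    rw [abs_of_nonneg this.1]; exact this.2
  have hφabs' : ∀ x ∈ Reg.J, |1 - φ x| ≤ 1 := by
    intro x hx
    have := hφmem x hx
    rw [abs_of_nonneg (by linarith [this.2] : (0:ℝ) ≤ 1 - φ x)]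
    linarith [this.1]
  have hth1 : ∀ x ∈ Reg.J, |φ x * derivWithin φ₁ Reg.J x| ≤ lipSemi φ₁ := by
    intro x hx
    rw [abs_mul]
    calc |φ x| * |derivWithin φ₁ Reg.J x| ≤ 1 * lipSemi φ₁ :=
      mul_le_mul (hφabs x hx) (hd1 x hx) (abs_nonneg _) one_pos.le
      _ = lipSemi φ₁ := one_mul _
  have hth2 : ∀ x ∈ Reg.J, |(1 - φ x) * derivWithin φ₂ Reg.J x| ≤ lipSemi φ₂ := by
    intro x hx
    rw [abs_mul]
    calc |1 - φ x| * |derivWithin φ₂ Reg.J x| ≤ 1 * lipSemi φ₂ :=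
      mul_le_mul (hφabs' x hx) (hd2 x hx) (abs_nonneg _) one_pos.le
      _ = lipSemi φ₂ := one_mul _
  have hbC : ContDiffOn ℝ ((m : WithTop ℕ∞) + 1) (fun y => (1:ℝ) - φ y) Reg.J :=
    contDiffOn_const.sub hφsmooth
  have h1m1 : (1 : WithTop ℕ∞) ≤ (m : WithTop ℕ∞) + 1 := le_trans hm1 le_self_add
  have main : ∀ k : ℕ, k ≤ m → ContDiffOn ℝ k u Reg.J := by
    intro k
    induction k with
    | zero =>
      intro _
      exact contDiffOn_zero.2 hucont
    | succ k ih =>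
      intro hk1
      have hk : k ≤ m := Nat.le_of_succ_le hk1
      have hkm : (k : WithTop ℕ∞) ≤ (m : WithTop ℕ∞) := by exact_mod_cast hk
      have hk1m : (k : WithTop ℕ∞) + 1 ≤ (m : WithTop ℕ∞) := by exact_mod_cast hk1
      have hkm1 : (k : WithTop ℕ∞) ≤ (m : WithTop ℕ∞) + 1 := le_trans hkm le_self_add
      have hk1m1 : (k : WithTop ℕ∞) + 1 ≤ (m : WithTop ℕ∞) + 1 := add_le_add hkm le_rfl
      have hukn : ContDiffOn ℝ k u Reg.J := ih hk
      obtain ⟨w, hwc, hud, hweq⟩ := Reg.C1step hp hq (hφ₁smooth.of_le hm1)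
        (hφ₂smooth.of_le hm1) (hφsmooth.of_le h1m1) (hbC.of_le h1m1) (hfsmooth.of_le h1m1)
        hth1 hth2 hL12 hρ0 hρ1 hK00 huconv hucont
      have hdu : ∀ x ∈ Reg.J, derivWithin u Reg.J x = w x := fun x hx =>
        (hud x hx).derivWithin (Reg.uJ x hx)
      have hA : ContDiffOn ℝ k (fun x => φ x * derivWithin φ₁ Reg.J x) Reg.J :=
        (hφsmooth.of_le hkm1).mul (hφ₁smooth.derivWithin Reg.uJ hk1m)
      have hB : ContDiffOn ℝ k (fun x => (1 - φ x) * derivWithin φ₂ Reg.J x) Reg.J :=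
        ((hbC.of_le hkm1)).mul (hφ₂smooth.derivWithin Reg.uJ hk1m)
      have hH : ContDiffOn ℝ k (fun x =>
          derivWithin φ Reg.J x * u (φ₁ x) +
          derivWithin (fun y => (1:ℝ) - φ y) Reg.J x * u (φ₂ x) + derivWithin f Reg.J x) Reg.J := by
        refine ContDiffOn.add (ContDiffOn.add ?_ ?_) (hfsmooth.derivWithin Reg.uJ hk1m1)
        · exact (hφsmooth.derivWithin Reg.uJ hk1m1).mul
            (hukn.comp (hφ₁smooth.of_le hkm) hp)
        · exact (hbC.derivWithin Reg.uJ hk1m1).mul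
            (hukn.comp (hφ₂smooth.of_le hkm) hq)
      have hp1 : ∀ x ∈ Reg.J, |derivWithin φ₁ Reg.J x| ≤ 1 := fun x hx =>
        le_trans (hd1 x hx) hL1le1
      have hq1 : ∀ x ∈ Reg.J, |derivWithin φ₂ Reg.J x| ≤ 1 := fun x hx =>
        le_trans (hd2 x hx) hL2le1
      have hwk : ContDiffOn ℝ k w Reg.J := by
        refine Reg.key k φ₁ φ₂ (fun x => φ x * derivWithin φ₁ Reg.J x)
          (fun x => (1 - φ x) * derivWithin φ₂ Reg.J x)
          (fun x => derivWithin φ Reg.J x * u (φ₁ x) +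
            derivWithin (fun y => (1:ℝ) - φ y) Reg.J x * u (φ₂ x) + derivWithin f Reg.J x)
          w (lipSemi φ₁) (lipSemi φ₂) hp hq (hφ₁smooth.of_le hkm) (hφ₂smooth.of_le hkm)
          hA hB hH (fun x hx => by simpa using hth1 x hx) (fun x hx => by simpa using hth2 x hx)
          hL12 hp1 hq1 hwc ?_
        intro x hx
        simpa using hweq x hx
      have hcast : ((k+1 : ℕ) : WithTop ℕ∞) = (k : WithTop ℕ∞) + 1 := by push_cast; rfl
      rw [hcast, contDiffOn_succ_iff_derivWithin Reg.uJ]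
      exact ⟨fun x hx => (hud x hx).differentiableWithinAt,
        fun hω => absurd hω (by simp), hwk.congr hdu⟩
  exact main m le_rfl
end

section
/- Let n ≥ 1, h = 1/n, x_i = i·h for 0 ≤ i ≤ n, and let P_h be the piecewise linear interpolation operator defined on each [x_{i−1}, x_i] by P_h v(x) = (1/h)·((x − x_{i−1})·v(x_i) + (x_i − x)·v(x_{i−1})). Then for every v ∈ H₀¹[0,1], the function P_h v belongs to H₀¹[0,1] and its Lipschitz seminorm satisfies ‖P_h v‖ ≤ ‖v‖. -/
open Set

/-- The piecewise linear interpolation `P_h v` of `v ∈ H₀¹[0,1]` on the uniform grid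
`x_i = i/n` belongs to `H₀¹[0,1]` and satisfies `‖P_h v‖ ≤ ‖v‖`. -/
theorem interpolation_maps_H01 (n : ℕ) (hn : 1 ≤ n) (v : ℝ → ℝ) (hv : MemH01 v)
    (Pv : ℝ → ℝ)
    (hPv : ∀ i : ℕ, 1 ≤ i → i ≤ n →
      ∀ x ∈ Icc (((i:ℝ) - 1) / n) ((i:ℝ) / n),
        Pv x = n * ((x - ((i:ℝ) - 1) / n) * v ((i:ℝ) / n)
          + ((i:ℝ) / n - x) * v (((i:ℝ) - 1) / n))) :
    MemH01 Pv ∧ lipSemi Pv ≤ lipSemi v := by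
  obtain ⟨⟨K, hK⟩, hv0, hv1⟩ := hv
  have hnR : (1:ℝ) ≤ (n:ℝ) := by exact_mod_cast hn
  have hn0 : (0:ℝ) < (n:ℝ) := by linarith
  set S : Set ℝ := {r : ℝ | ∃ x ∈ Icc (0:ℝ) 1, ∃ y ∈ Icc (0:ℝ) 1, x ≠ y ∧
      r = |v x - v y| / |x - y|} with hS
  have hLsemi : lipSemi v = sSup S := rfl
  set L : ℝ := sSup S with hLdef
  -- S is bounded above by K
  have hbdd : BddAbove S := by
    refine ⟨K, ?_⟩
    rintro r ⟨x, hx, y, hy, hxy, rfl⟩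
    have hpos : 0 < |x - y| := abs_pos.2 (sub_ne_zero.2 hxy)
    have := hK.dist_le_mul x hx y hy
    rw [Real.dist_eq, Real.dist_eq] at this
    rw [div_le_iff₀ hpos]
    exact this
  have h0S : (0:ℝ) ∈ S := by
    refine ⟨0, ⟨le_refl _, zero_le_one⟩, 1, ⟨zero_le_one, le_refl _⟩, by norm_num, ?_⟩
    simp [hv0, hv1]
  have hL0 : 0 ≤ L := le_csSup hbdd h0S
  -- v is Lipschitz with constant L
  have hvL : ∀ a ∈ Icc (0:ℝ) 1, ∀ b ∈ Icc (0:ℝ) 1, |v a - v b| ≤ L * |a - b| := by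
    intro a ha b hb
    rcases eq_or_ne a b with rfl | hab
    · simp
    · have hpos : 0 < |a - b| := abs_pos.2 (sub_ne_zero.2 hab)
      have hmem : |v a - v b| / |a - b| ∈ S := ⟨a, ha, b, hb, hab, rfl⟩
      have := le_csSup hbdd hmem
      rw [div_le_iff₀ hpos] at this
      linarith [this]
  -- grid points lie in [0,1]
  have hgrid01 : ∀ i : ℕ, i ≤ n → (i:ℝ)/n ∈ Icc (0:ℝ) 1 := by
    intro i hi
    constructor
    · positivity
    · rw [div_le_one hn0]; exact_mod_cast hi
  have hgrid01' : ∀ i : ℕ, 1 ≤ i → i ≤ n → ((i:ℝ)-1)/n ∈ Icc (0:ℝ) 1 := by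
    intro i h1 h2
    have hi1 : (1:ℝ) ≤ (i:ℝ) := by exact_mod_cast h1
    have hi2 : (i:ℝ) ≤ (n:ℝ) := by exact_mod_cast h2
    constructor
    · apply div_nonneg (by linarith) hn0.le
    · rw [div_le_one hn0]; linarith
  -- membership of endpoints in interval i
  have hmemR : ∀ i : ℕ, 1 ≤ i → (i:ℝ)/n ∈ Icc (((i:ℝ)-1)/n) ((i:ℝ)/n) := by
    intro i h1
    have hi1 : (1:ℝ) ≤ (i:ℝ) := by exact_mod_cast h1
    exact ⟨by apply div_le_div_of_nonneg_right (by linarith) hn0.le, le_refl _⟩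
  have hmemL : ∀ i : ℕ, 1 ≤ i → ((i:ℝ)-1)/n ∈ Icc (((i:ℝ)-1)/n) ((i:ℝ)/n) := by
    intro i h1
    have hi1 : (1:ℝ) ≤ (i:ℝ) := by exact_mod_cast h1
    exact ⟨le_refl _, by apply div_le_div_of_nonneg_right (by linarith) hn0.le⟩
  -- Pv agrees with v at grid points
  have hPgR : ∀ i : ℕ, 1 ≤ i → i ≤ n → Pv ((i:ℝ)/n) = v ((i:ℝ)/n) := by
    intro i h1 h2
    rw [hPv i h1 h2 _ (hmemR i h1)]
    field_simp
    ring
  have hPgL : ∀ i : ℕ, 1 ≤ i → i ≤ n → Pv (((i:ℝ)-1)/n) = v (((i:ℝ)-1)/n) := by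
    intro i h1 h2
    rw [hPv i h1 h2 _ (hmemL i h1)]
    field_simp
    ring
  -- same-interval Lipschitz bound
  have hsame : ∀ i : ℕ, 1 ≤ i → i ≤ n →
      ∀ x ∈ Icc (((i:ℝ)-1)/n) ((i:ℝ)/n), ∀ y ∈ Icc (((i:ℝ)-1)/n) ((i:ℝ)/n),
      |Pv x - Pv y| ≤ L * |x - y| := by
    intro i h1 h2 x hx y hy
    have hdiff : Pv x - Pv y = (n:ℝ) * (x - y) * (v ((i:ℝ)/n) - v (((i:ℝ)-1)/n)) := by
      rw [hPv i h1 h2 x hx, hPv i h1 h2 y hy]; ring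
    have hvd : |v ((i:ℝ)/n) - v (((i:ℝ)-1)/n)| ≤ L * (1/n) := by
      have := hvL _ (hgrid01 i h2) _ (hgrid01' i h1 h2)
      have heq : |(i:ℝ)/n - ((i:ℝ)-1)/n| = 1/n := by
        rw [abs_of_nonneg]
        · field_simp
          ring
        · have : ((i:ℝ)-1)/n ≤ (i:ℝ)/n := div_le_div_of_nonneg_right (by linarith) hn0.le
          linarith [this]
      rw [heq] at this
      exact this
    calc |Pv x - Pv y| = (n:ℝ) * |x - y| * |v ((i:ℝ)/n) - v (((i:ℝ)-1)/n)| := by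
          rw [hdiff, abs_mul, abs_mul, abs_of_nonneg hn0.le]
      _ ≤ (n:ℝ) * |x - y| * (L * (1/n)) := by
          apply mul_le_mul_of_nonneg_left hvd
          positivity
      _ = L * |x - y| := by field_simp
  -- every point of [0,1] lies in some interval
  have hidx : ∀ x ∈ Icc (0:ℝ) 1, ∃ i : ℕ, 1 ≤ i ∧ i ≤ n ∧
      x ∈ Icc (((i:ℝ)-1)/n) ((i:ℝ)/n) := by
    intro x hx
    obtain ⟨hx0, hx1⟩ := hx
    set k : ℕ := min (n-1) (⌊(n:ℝ)*x⌋).toNat with hk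
    refine ⟨k+1, Nat.le_add_left 1 k, ?_, ?_, ?_⟩
    · have : k ≤ n - 1 := min_le_left _ _
      omega
    · -- lower bound : ((k+1:ℝ)-1)/n = k/n ≤ x
      have hfl : (0:ℤ) ≤ ⌊(n:ℝ)*x⌋ := Int.floor_nonneg.2 (mul_nonneg hn0.le hx0)
      have hcast : ((⌊(n:ℝ)*x⌋).toNat : ℝ) = ((⌊(n:ℝ)*x⌋ : ℤ) : ℝ) := by
        exact_mod_cast Int.toNat_of_nonneg hfl
      have hk1 : (k:ℝ) ≤ (n:ℝ)*x := by
        have h1 : (k:ℕ) ≤ (⌊(n:ℝ)*x⌋).toNat := min_le_right _ _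
        calc (k:ℝ) ≤ ((⌊(n:ℝ)*x⌋).toNat : ℝ) := by exact_mod_cast h1
          _ = ((⌊(n:ℝ)*x⌋ : ℤ) : ℝ) := hcast
          _ ≤ (n:ℝ)*x := Int.floor_le _
      rw [div_le_iff₀ hn0]
      push_cast
      linarith
    · -- upper bound : x ≤ (k+1)/n
      rw [le_div_iff₀ hn0]
      push_cast
      rcases lt_or_ge ((n:ℝ)*x) n with hlt | hge
      · have hfl : ⌊(n:ℝ)*x⌋ < (n:ℤ) := by
          apply Int.floor_lt.2
          push_cast
          linarith
        have hfl0 : (0:ℤ) ≤ ⌊(n:ℝ)*x⌋ := Int.floor_nonneg.2 (mul_nonneg hn0.le hx0)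
        have hcast : ((⌊(n:ℝ)*x⌋).toNat : ℝ) = ((⌊(n:ℝ)*x⌋ : ℤ) : ℝ) := by
          exact_mod_cast Int.toNat_of_nonneg hfl0
        have hkeq : ((⌊(n:ℝ)*x⌋).toNat : ℤ) ≤ (n:ℤ) - 1 := by
          rw [Int.toNat_of_nonneg hfl0]
          omega
        have hkk : k = (⌊(n:ℝ)*x⌋).toNat := by
          have : (⌊(n:ℝ)*x⌋).toNat ≤ n - 1 := by omega
          simp [hk, min_eq_right this]
        have : (n:ℝ)*x < ((⌊(n:ℝ)*x⌋ : ℤ) : ℝ) + 1 := Int.lt_floor_add_one _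
        have hc : ((⌊(n:ℝ)*x⌋ : ℤ) : ℝ) = (k:ℝ) := by
          rw [hkk]; exact hcast.symm
        linarith
      · -- then x = 1 and k = n-1
        have hx1' : x = 1 := by
          have : (n:ℝ) ≤ (n:ℝ)*x := hge
          nlinarith
        have hkn : k ≤ n - 1 := min_le_left _ _
        have hflge : (n:ℤ) ≤ ⌊(n:ℝ)*x⌋ := by
          apply Int.le_floor.2
          push_cast
          linarith
        have : n - 1 ≤ (⌊(n:ℝ)*x⌋).toNat := by omega
        have hkeq : k = n - 1 := by
          simp [hk, min_eq_left this]
        have hkR : ((k:ℝ)+1) = (n:ℝ) := by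
          rw [hkeq]
          rw [Nat.cast_sub hn]
          push_cast
          ring
        rw [hx1', hkR]; linarith
  -- full Lipschitz bound for Pv
  have hPL : ∀ x ∈ Icc (0:ℝ) 1, ∀ y ∈ Icc (0:ℝ) 1, |Pv x - Pv y| ≤ L * |x - y| := by
    have main : ∀ x ∈ Icc (0:ℝ) 1, ∀ y ∈ Icc (0:ℝ) 1, x ≤ y →
        |Pv x - Pv y| ≤ L * |x - y| := by
      intro x hx y hy hxy
      obtain ⟨i, hi1, hi2, hxi⟩ := hidx x hx
      obtain ⟨j, hj1, hj2, hyj⟩ := hidx y hy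
      rcases lt_trichotomy i j with hij | hij | hij
      · -- i < j : three-part split
        have hij1 : i ≤ j - 1 := by omega
        have hiR : (i:ℝ) ≤ (j:ℝ) - 1 := by
          have : (i:ℝ) ≤ ((j:ℝ) - 1) := by
            have := (Nat.cast_le (α := ℝ)).2 hij1
            have hjc : ((j-1:ℕ):ℝ) = (j:ℝ) - 1 := by
              push_cast [Nat.cast_sub hj1]; ring
            rw [hjc] at this; exact this
          exact this
        set a : ℝ := (i:ℝ)/n with ha
        set b : ℝ := ((j:ℝ)-1)/n with hb
        have hxa : x ≤ a := hxi.2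
        have hab : a ≤ b := div_le_div_of_nonneg_right hiR hn0.le
        have hby : b ≤ y := hyj.1
        have ha01 : a ∈ Icc (0:ℝ) 1 := hgrid01 i hi2
        have hb01 : b ∈ Icc (0:ℝ) 1 := hgrid01' j hj1 hj2
        have haI : a ∈ Icc (((i:ℝ)-1)/n) ((i:ℝ)/n) := hmemR i hi1
        have hbJ : b ∈ Icc (((j:ℝ)-1)/n) ((j:ℝ)/n) := hmemL j hj1
        have h1 : |Pv x - Pv a| ≤ L * (a - x) := by
          have := hsame i hi1 hi2 x hxi a haI
          rwa [show |x - a| = a - x by rw [abs_of_nonpos (by linarith)]; ring] at this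
        have h2 : |Pv a - Pv b| ≤ L * (b - a) := by
          rw [hPgR i hi1 hi2, hPgL j hj1 hj2]
          have := hvL a ha01 b hb01
          rwa [show |a - b| = b - a by rw [abs_of_nonpos (by linarith)]; ring] at this
        have h3 : |Pv b - Pv y| ≤ L * (y - b) := by
          have := hsame j hj1 hj2 b hbJ y hyj
          rwa [show |b - y| = y - b by rw [abs_of_nonpos (by linarith)]; ring] at this
        have habs : |x - y| = y - x := by rw [abs_of_nonpos (by linarith)]; ring
        calc |Pv x - Pv y| ≤ |Pv x - Pv a| + |Pv a - Pv b| + |Pv b - Pv y| := by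
              have t1 : Pv x - Pv y = (Pv x - Pv a) + (Pv a - Pv b) + (Pv b - Pv y) := by ring
              rw [t1]
              exact (abs_add_le _ _).trans (by gcongr; exact abs_add_le _ _)
          _ ≤ L * (a - x) + L * (b - a) + L * (y - b) := by linarith
          _ = L * |x - y| := by rw [habs]; ring
      · subst hij
        exact hsame i hi1 hi2 x hxi y hyj
      · -- j < i forces x = y
        have hjR : (j:ℝ) ≤ (i:ℝ) - 1 := by
          have hji : (j:ℕ) ≤ i - 1 := by omega
          have := (Nat.cast_le (α := ℝ)).2 hji
          have hic : ((i-1:ℕ):ℝ) = (i:ℝ) - 1 := by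
            push_cast [Nat.cast_sub hi1]; ring
          rw [hic] at this; exact this
        have : y ≤ x := by
          have h1 : y ≤ (j:ℝ)/n := hyj.2
          have h2 : ((i:ℝ)-1)/n ≤ x := hxi.1
          have h3 : (j:ℝ)/n ≤ ((i:ℝ)-1)/n := div_le_div_of_nonneg_right hjR hn0.le
          linarith
        have hxy' : x = y := le_antisymm hxy this
        subst hxy'
        simp
    intro x hx y hy
    rcases le_total x y with h | h
    · exact main x hx y hy h
    · have := main y hy x hx h
      rwa [abs_sub_comm (Pv y), abs_sub_comm y] at this
  -- Pv 0 = 0 and Pv 1 = 0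
  have hPv0 : Pv 0 = 0 := by
    have := hPv 1 le_rfl hn 0 (by
      constructor
      · norm_num
      · positivity)
    rw [this]
    norm_num [hv0]
  have hPv1 : Pv 1 = 0 := by
    have := hPv n hn le_rfl 1 (by
      constructor
      · rw [div_le_one hn0]; linarith
      · rw [le_div_iff₀ hn0]; linarith)
    rw [this]
    have hnn : (n:ℝ)/n = 1 := div_self hn0.ne'
    rw [hnn, hv1]
    ring
  refine ⟨⟨⟨L.toNNReal, ?_⟩, hPv0, hPv1⟩, ?_⟩
  · -- Lipschitz
    apply LipschitzOnWith.of_dist_le_mul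
    intro x hx y hy
    rw [Real.dist_eq, Real.dist_eq, Real.coe_toNNReal _ hL0]
    exact hPL x hx y hy
  · -- seminorm bound
    apply csSup_le
    · exact ⟨0, 0, ⟨le_refl _, zero_le_one⟩, 1, ⟨zero_le_one, le_refl _⟩, by norm_num,
        by simp [hPv0, hPv1]⟩
    · rintro r ⟨x, hx, y, hy, hxy, rfl⟩
      have hpos : 0 < |x - y| := abs_pos.2 (sub_ne_zero.2 hxy)
      rw [div_le_iff₀ hpos]
      rw [hLsemi]
      exact hPL x hx y hy
end

section
/- For n ≥ 1 let h = 1/n, x_i = i·h, and let P_h be the piecewise linear interpolation operator on the uniform grid, defined on each [x_{i−1}, x_i] by P_h v(x) = (1/h)·((x − x_{i−1})·v(x_i) + (x_i − x)·v(x_{i−1})). If v ∈ H₀¹[0,1] is additionally twice continuously differentiable on [0,1], then there exists a constant C = C(v) > 0, independent of h, such that the Lipschitz seminorm of the interpolation error satisfies ‖v − P_h v‖ ≤ C·h for all n ≥ 1. -/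
open Set

lemma key_taylor (v f' : ℝ → ℝ) (M : ℝ) (hM : 0 ≤ M)
    (hd : ∀ z ∈ Icc (0:ℝ) 1, HasDerivWithinAt v (f' z) (Icc (0:ℝ) 1) z)
    (hlip : ∀ z ∈ Icc (0:ℝ) 1, ∀ w ∈ Icc (0:ℝ) 1, |f' z - f' w| ≤ M * |z - w|)
    (a b S : ℝ) (hab : a < b) (hsub : Icc a b ⊆ Icc (0:ℝ) 1)
    (hS : v b - v a = S * (b - a))
    (x y : ℝ) (hx : x ∈ Icc a b) (hy : y ∈ Icc a b) :
    |v x - v y - S * (x - y)| ≤ 2 * M * (b - a) * |x - y| := by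
  set g : ℝ → ℝ := fun z => v z - f' y * z with hg
  have hgd : ∀ z ∈ Icc a b, HasDerivWithinAt g (f' z - f' y) (Icc a b) z := by
    intro z hz
    have h1 : HasDerivWithinAt v (f' z) (Icc a b) z := (hd z (hsub hz)).mono hsub
    have h2 : HasDerivWithinAt (fun w : ℝ => f' y * w) (f' y) (Icc a b) z := by
      simpa using (hasDerivWithinAt_id z (Icc a b)).const_mul (f' y)
    exact h1.sub h2
  have hbound : ∀ z ∈ Icc a b, ‖f' z - f' y‖ ≤ M * (b - a) := by
    intro z hz
    have h1 := hlip z (hsub hz) y (hsub hy)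
    have h2 : |z - y| ≤ b - a := by
      rw [abs_le]; constructor <;> [linarith [hz.1, hz.2, hy.1, hy.2]; linarith [hz.1, hz.2, hy.1, hy.2]]
    calc ‖f' z - f' y‖ = |f' z - f' y| := rfl
      _ ≤ M * |z - y| := h1
      _ ≤ M * (b - a) := by nlinarith
  have hconv : Convex ℝ (Icc a b) := convex_Icc a b
  have A : ‖g x - g y‖ ≤ M * (b - a) * ‖x - y‖ :=
    hconv.norm_image_sub_le_of_norm_hasDerivWithin_le hgd hbound hy hx
  have B : ‖g b - g a‖ ≤ M * (b - a) * ‖b - a‖ :=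
    hconv.norm_image_sub_le_of_norm_hasDerivWithin_le hgd hbound
      (left_mem_Icc.2 hab.le) (right_mem_Icc.2 hab.le)
  have hBa : |S - f' y| * (b - a) ≤ M * (b - a) * (b - a) := by
    have : g b - g a = (S - f' y) * (b - a) := by
      simp only [hg]; nlinarith [hS]
    rw [this] at B
    simpa [abs_mul, abs_of_pos (sub_pos.2 hab)] using B
  have hSy : |S - f' y| ≤ M * (b - a) := by
    have hba : 0 < b - a := sub_pos.2 hab
    nlinarith [abs_nonneg (S - f' y)]
  have hA' : |v x - v y - f' y * (x - y)| ≤ M * (b - a) * |x - y| := by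
    have : g x - g y = v x - v y - f' y * (x - y) := by simp only [hg]; ring
    rw [this] at A
    simpa using A
  calc |v x - v y - S * (x - y)|
      = |(v x - v y - f' y * (x - y)) + (f' y - S) * (x - y)| := by ring_nf
    _ ≤ |v x - v y - f' y * (x - y)| + |(f' y - S) * (x - y)| := abs_add_le _ _
    _ ≤ M * (b - a) * |x - y| + M * (b - a) * |x - y| := by
        gcongr
        rw [abs_mul]
        have : |f' y - S| ≤ M * (b - a) := by rwa [abs_sub_comm]
        exact mul_le_mul_of_nonneg_right this (abs_nonneg _)
    _ = 2 * M * (b - a) * |x - y| := by ring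

set_option maxHeartbeats 1000000 in
lemma interp_aux (v : ℝ → ℝ)
    (hv2 : ContDiffOn ℝ 2 v (Icc (0:ℝ) 1))
    (P : ℕ → ℝ → ℝ)
    (hP : ∀ n : ℕ, 1 ≤ n → ∀ i : ℕ, 1 ≤ i → i ≤ n →
      ∀ x ∈ Icc (((i:ℝ) - 1) / n) ((i:ℝ) / n),
        P n x = n * ((x - ((i:ℝ) - 1) / n) * v ((i:ℝ) / n)
          + ((i:ℝ) / n - x) * v (((i:ℝ) - 1) / n))) :
    ∃ C : ℝ, 0 < C ∧ ∀ n : ℕ, 1 ≤ n →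
      sSup {r : ℝ | ∃ x ∈ Icc (0:ℝ) 1, ∃ y ∈ Icc (0:ℝ) 1, x ≠ y ∧
        r = |(v x - P n x) - (v y - P n y)| / |x - y|} ≤ C * (1 / n) := by
  have hU : UniqueDiffOn ℝ (Icc (0:ℝ) 1) := uniqueDiffOn_Icc one_pos
  set f' : ℝ → ℝ := derivWithin v (Icc (0:ℝ) 1) with hf'def
  have hd : ∀ z ∈ Icc (0:ℝ) 1, HasDerivWithinAt v (f' z) (Icc (0:ℝ) 1) z := fun z hz =>
    ((hv2.differentiableOn (by norm_num) z hz)).hasDerivWithinAt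
  have hc1 : ContDiffOn ℝ 1 f' (Icc (0:ℝ) 1) := hv2.derivWithin hU (by norm_num)
  set f'' : ℝ → ℝ := derivWithin f' (Icc (0:ℝ) 1) with hf''def
  have hd2 : ∀ z ∈ Icc (0:ℝ) 1, HasDerivWithinAt f' (f'' z) (Icc (0:ℝ) 1) z := fun z hz =>
    ((hc1.differentiableOn one_ne_zero z hz)).hasDerivWithinAt
  have hc2 : ContinuousOn f'' (Icc (0:ℝ) 1) := hc1.continuousOn_derivWithin hU le_rfl
  obtain ⟨M0, hM0⟩ := isCompact_Icc.exists_bound_of_continuousOn hc2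
  set M := max M0 0 with hMdef
  have hM : 0 ≤ M := le_max_right _ _
  have hbnd : ∀ z ∈ Icc (0:ℝ) 1, ‖f'' z‖ ≤ M := fun z hz => (hM0 z hz).trans (le_max_left _ _)
  have hlip : ∀ z ∈ Icc (0:ℝ) 1, ∀ w ∈ Icc (0:ℝ) 1, |f' z - f' w| ≤ M * |z - w| := by
    intro z hz w hw
    have := (convex_Icc (0:ℝ) 1).norm_image_sub_le_of_norm_hasDerivWithin_le hd2 hbnd hw hz
    simpa [Real.norm_eq_abs] using this
  refine ⟨2 * M + 1, by positivity, ?_⟩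
  intro n hn
  have hn0 : (0:ℝ) < n := by exact_mod_cast hn
  -- error vanishes at the grid nodes
  have node : ∀ k : ℕ, 1 ≤ k → k ≤ n → v ((k:ℝ)/n) - P n ((k:ℝ)/n) = 0 := by
    intro k hk1 hkn
    have hmem : (k:ℝ)/n ∈ Icc (((k:ℝ)-1)/n) ((k:ℝ)/n) := by
      constructor
      · rw [div_le_div_iff₀ hn0 hn0]; nlinarith
      · exact le_rfl
    rw [hP n hn k hk1 hkn _ hmem]
    field_simp
    ring
  -- per-interval Lipschitz bound for the error
  have ib : ∀ i : ℕ, 1 ≤ i → i ≤ n → ∀ x ∈ Icc (((i:ℝ)-1)/n) ((i:ℝ)/n),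
      ∀ y ∈ Icc (((i:ℝ)-1)/n) ((i:ℝ)/n),
      |(v x - P n x) - (v y - P n y)| ≤ 2 * M * (1/n) * |x - y| := by
    intro i hi1 hin x hx y hy
    set a := ((i:ℝ)-1)/n with hadef
    set b := (i:ℝ)/n with hbdef
    have hi1' : (1:ℝ) ≤ (i:ℝ) := by exact_mod_cast hi1
    have hin' : (i:ℝ) ≤ (n:ℝ) := by exact_mod_cast hin
    have hba : b - a = 1/n := by rw [hadef, hbdef]; field_simp; ring
    have hab : a < b := by
      have : (0:ℝ) < 1/n := by positivity
      linarith
    have hsub : Icc a b ⊆ Icc (0:ℝ) 1 := by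
      apply Icc_subset_Icc
      · rw [hadef]; apply div_nonneg <;> linarith
      · rw [hbdef, div_le_one hn0]; exact hin'
    have hS : v b - v a = ((n:ℝ) * (v b - v a)) * (b - a) := by
      rw [hba]; field_simp
    have hE : (v x - P n x) - (v y - P n y)
        = v x - v y - ((n:ℝ) * (v b - v a)) * (x - y) := by
      rw [hP n hn i hi1 hin x hx, hP n hn i hi1 hin y hy]; ring
    rw [hE]
    calc |v x - v y - ((n:ℝ) * (v b - v a)) * (x - y)|
        ≤ 2 * M * (b - a) * |x - y| :=
          key_taylor v f' M hM hd hlip a b _ hab hsub hS x y hx hy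
      _ = 2 * M * (1/n) * |x - y| := by rw [hba]
  -- grid index for a point
  have idx_mem : ∀ x ∈ Icc (0:ℝ) 1,
      1 ≤ max 1 ⌈(n:ℝ)*x⌉₊ ∧ max 1 ⌈(n:ℝ)*x⌉₊ ≤ n ∧
      ((max 1 ⌈(n:ℝ)*x⌉₊ : ℕ):ℝ)/n - 1/n ≤ x ∧ x ≤ ((max 1 ⌈(n:ℝ)*x⌉₊ : ℕ):ℝ)/n := by
    intro x hx
    obtain ⟨hx0, hx1⟩ := hx
    refine ⟨le_max_left _ _, ?_, ?_, ?_⟩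
    · apply max_le hn
      apply Nat.ceil_le.2
      calc (n:ℝ)*x ≤ (n:ℝ)*1 := by nlinarith
        _ = ((n:ℕ):ℝ) := by norm_num
    · rw [div_sub_div_same, div_le_iff₀ hn0]
      rcases le_or_gt (⌈(n:ℝ)*x⌉₊) 1 with h | h
      · rw [max_eq_left h]; push_cast; nlinarith
      · rw [max_eq_right h.le]
        have h2 := Nat.ceil_lt_add_one (by positivity : (0:ℝ) ≤ (n:ℝ)*x)
        nlinarith
    · rw [le_div_iff₀ hn0]
      have h1 := Nat.le_ceil ((n:ℝ)*x)
      have h2 : ((⌈(n:ℝ)*x⌉₊:ℕ):ℝ) ≤ ((max 1 ⌈(n:ℝ)*x⌉₊ : ℕ):ℝ) := by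
        exact_mod_cast le_max_right 1 _
      nlinarith
  -- main two-point estimate
  have main : ∀ x ∈ Icc (0:ℝ) 1, ∀ y ∈ Icc (0:ℝ) 1, x ≤ y →
      |(v x - P n x) - (v y - P n y)| ≤ 2 * M * (1/n) * |x - y| := by
    intro x hx y hy hxy
    obtain ⟨hi1, hin, hia, hib'⟩ := idx_mem x hx
    obtain ⟨hj1, hjn, hja, hjb⟩ := idx_mem y hy
    set i := max 1 ⌈(n:ℝ)*x⌉₊ with hidef
    set j := max 1 ⌈(n:ℝ)*y⌉₊ with hjdef
    have hij : i ≤ j := by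
      apply max_le_max le_rfl
      apply Nat.ceil_le_ceil
      nlinarith [hx.1]
    have hxmem : x ∈ Icc (((i:ℝ)-1)/n) ((i:ℝ)/n) := by
      constructor
      · calc ((i:ℝ)-1)/n = (i:ℝ)/n - 1/n := by ring
          _ ≤ x := hia
      · exact hib'
    have hymem : y ∈ Icc (((j:ℝ)-1)/n) ((j:ℝ)/n) := by
      constructor
      · calc ((j:ℝ)-1)/n = (j:ℝ)/n - 1/n := by ring
          _ ≤ y := hja
      · exact hjb
    rcases eq_or_lt_of_le hij with h | h
    · apply ib i hi1 hin x hxmem y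
      rw [h]; exact hymem
    · -- different intervals: pass through the nodes i/n and (j-1)/n
      have hnode1 : v ((i:ℝ)/n) - P n ((i:ℝ)/n) = 0 := node i hi1 hin
      have hj1' : 1 ≤ j - 1 := by omega
      have hcast : ((j - 1 : ℕ):ℝ) = (j:ℝ) - 1 := by
        push_cast [Nat.cast_sub (by omega : 1 ≤ j)]; ring
      have hnode2 : v (((j:ℝ)-1)/n) - P n (((j:ℝ)-1)/n) = 0 := by
        have := node (j-1) hj1' (by omega)
        rwa [hcast] at this
      have hbmem : (i:ℝ)/n ∈ Icc (((i:ℝ)-1)/n) ((i:ℝ)/n) := by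
        constructor
        · rw [div_le_div_iff₀ hn0 hn0]; nlinarith
        · exact le_rfl
      have hamem : ((j:ℝ)-1)/n ∈ Icc (((j:ℝ)-1)/n) ((j:ℝ)/n) := by
        constructor
        · exact le_rfl
        · rw [div_le_div_iff₀ hn0 hn0]; nlinarith
      have e1 := ib i hi1 hin x hxmem ((i:ℝ)/n) hbmem
      have e2 := ib j hj1 hjn (((j:ℝ)-1)/n) hamem y hymem
      rw [hnode1] at e1
      rw [hnode2] at e2
      have hxb : x ≤ (i:ℝ)/n := hxmem.2
      have hay : ((j:ℝ)-1)/n ≤ y := hymem.1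
      have hle : (i:ℝ)/n ≤ ((j:ℝ)-1)/n := by
        have hij' : (i:ℝ) + 1 ≤ (j:ℝ) := by exact_mod_cast h
        rw [div_le_div_iff₀ hn0 hn0]; nlinarith
      have e1' : |v x - P n x| ≤ 2 * M * (1/n) * ((i:ℝ)/n - x) := by
        have habs : |x - (i:ℝ)/n| = (i:ℝ)/n - x := by
          rw [abs_sub_comm, abs_of_nonneg]; linarith
        calc |v x - P n x| = |(v x - P n x) - 0| := by rw [sub_zero]
          _ ≤ 2 * M * (1/n) * |x - (i:ℝ)/n| := e1
          _ = 2 * M * (1/n) * ((i:ℝ)/n - x) := by rw [habs]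
      have e2' : |v y - P n y| ≤ 2 * M * (1/n) * (y - ((j:ℝ)-1)/n) := by
        have habs : |((j:ℝ)-1)/n - y| = y - ((j:ℝ)-1)/n := by
          rw [abs_sub_comm, abs_of_nonneg]; linarith
        calc |v y - P n y| = |0 - (v y - P n y)| := by rw [zero_sub, abs_neg]
          _ ≤ 2 * M * (1/n) * |((j:ℝ)-1)/n - y| := e2
          _ = 2 * M * (1/n) * (y - ((j:ℝ)-1)/n) := by rw [habs]
      have habsxy : |x - y| = y - x := by rw [abs_sub_comm, abs_of_nonneg]; linarith
      calc |(v x - P n x) - (v y - P n y)|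
          ≤ |v x - P n x| + |v y - P n y| := abs_sub _ _
        _ ≤ 2 * M * (1/n) * ((i:ℝ)/n - x) + 2 * M * (1/n) * (y - ((j:ℝ)-1)/n) := by
            exact add_le_add e1' e2'
        _ = 2 * M * (1/n) * (((i:ℝ)/n - x) + (y - ((j:ℝ)-1)/n)) := by ring
        _ ≤ 2 * M * (1/n) * (y - x) := by
            have hc0 : (0:ℝ) ≤ 2 * M * (1/(n:ℝ)) := by positivity
            have hsum : ((i:ℝ)/n - x) + (y - ((j:ℝ)-1)/n) ≤ y - x := by linarith
            exact mul_le_mul_of_nonneg_left hsum hc0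
        _ = 2 * M * (1/n) * |x - y| := by rw [habsxy]
  -- conclude via Real.sSup_le
  apply Real.sSup_le
  · rintro r ⟨x, hx, y, hy, hxy, rfl⟩
    have hkey : |(v x - P n x) - (v y - P n y)| ≤ 2 * M * (1/n) * |x - y| := by
      rcases le_total x y with h | h
      · exact main x hx y hy h
      · rw [abs_sub_comm (v x - P n x), abs_sub_comm x y]; exact main y hy x hx h
    have hxyabs : (0:ℝ) < |x - y| := abs_pos.2 (sub_ne_zero.2 hxy)
    rw [div_le_iff₀ hxyabs]
    calc |(v x - P n x) - (v y - P n y)| ≤ 2 * M * (1/n) * |x - y| := hkey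
      _ ≤ (2 * M + 1) * (1/n) * |x - y| := by
          have h1 : 2 * M * (1/(n:ℝ)) ≤ (2 * M + 1) * (1/n) := by
            have h2 : (0:ℝ) ≤ 1/n := by positivity
            nlinarith
          exact mul_le_mul_of_nonneg_right h1 (abs_nonneg _)
  · positivity

/-- If `v ∈ H₀¹[0,1]` is twice continuously differentiable, then the Lipschitz seminorm of
the piecewise linear interpolation error satisfies `‖v - P_h v‖ ≤ C h` with `h = 1/n` and a
constant `C = C(v) > 0` independent of `h`. -/
theorem interpolation_error_first_order (v : ℝ → ℝ) (hv : MemH01 v)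
    (hv2 : ContDiffOn ℝ 2 v (Icc (0:ℝ) 1))
    (P : ℕ → ℝ → ℝ)
    (hP : ∀ n : ℕ, 1 ≤ n → ∀ i : ℕ, 1 ≤ i → i ≤ n →
      ∀ x ∈ Icc (((i:ℝ) - 1) / n) ((i:ℝ) / n),
        P n x = n * ((x - ((i:ℝ) - 1) / n) * v ((i:ℝ) / n)
          + ((i:ℝ) / n - x) * v (((i:ℝ) - 1) / n))) :
    ∃ C : ℝ, 0 < C ∧ ∀ n : ℕ, 1 ≤ n →
      lipSemi (fun x => v x - P n x) ≤ C * (1 / n) := by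
  obtain ⟨C, hC, hbound⟩ := interp_aux v hv2 P hP
  exact ⟨C, hC, fun n hn => by simpa [lipSemi] using hbound n hn⟩
end

section
/- (Convergence) Assume φ, φ₁, φ₂, f satisfy assumption (A) and that q := (1+‖φ‖)·(‖φ₁‖+‖φ₂‖) < 1. Let u ∈ H₀¹[0,1] be the unique solution of u = Tu + f, where Tu(x) = φ(x)·u(φ₁(x)) + (1−φ(x))·u(φ₂(x)). For n ≥ 1, h = 1/n, let u_h be a continuous function, linear on each [x_{i−1}, x_i] of the uniform grid x_i = i·h, with u_h(0) = u_h(1) = 0 and u_h(x_i) = T u_h(x_i) + f(x_i) for 1 ≤ i ≤ n−1. Then the Lipschitz seminorm of the error satisfies ‖u − u_h‖ ≤ ‖u − P_h u‖ / (1 − q), where P_h is the piecewise linear interpolation operator on the uniform grid. -/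
open Set

lemma bdd_of_lip {v : ℝ → ℝ} (h : IsLipOn01 v) :
    BddAbove {r : ℝ | ∃ x ∈ Icc (0:ℝ) 1, ∃ y ∈ Icc (0:ℝ) 1, x ≠ y ∧ r = |v x - v y| / |x - y|} := by
  obtain ⟨K, hK⟩ := h
  refine ⟨K, ?_⟩
  rintro r ⟨x, hx, y, hy, hxy, rfl⟩
  have hd : 0 < |x - y| := abs_pos.2 (sub_ne_zero.2 hxy)
  rw [div_le_iff₀ hd]
  have := hK.dist_le_mul x hx y hy
  simpa [Real.dist_eq] using this

lemma lipSemi_bound {v : ℝ → ℝ} (h : IsLipOn01 v) :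
    ∀ x ∈ Icc (0:ℝ) 1, ∀ y ∈ Icc (0:ℝ) 1, |v x - v y| ≤ lipSemi v * |x - y| := by
  intro x hx y hy
  rcases eq_or_ne x y with rfl | hxy
  · simp
  · have hd : 0 < |x - y| := abs_pos.2 (sub_ne_zero.2 hxy)
    have hle : |v x - v y| / |x - y| ≤ lipSemi v :=
      le_csSup (bdd_of_lip h) ⟨x, hx, y, hy, hxy, rfl⟩
    calc |v x - v y| = |v x - v y| / |x - y| * |x - y| := by field_simp
    _ ≤ lipSemi v * |x - y| := mul_le_mul_of_nonneg_right hle hd.le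

lemma lipSemi_le {v : ℝ → ℝ} {C : ℝ}
    (h : ∀ x ∈ Icc (0:ℝ) 1, ∀ y ∈ Icc (0:ℝ) 1, |v x - v y| ≤ C * |x - y|) : lipSemi v ≤ C := by
  have hne : {r : ℝ | ∃ x ∈ Icc (0:ℝ) 1, ∃ y ∈ Icc (0:ℝ) 1, x ≠ y ∧ r = |v x - v y| / |x - y|}.Nonempty :=
    ⟨|v 0 - v 1| / |0 - 1|, 0, by norm_num, 1, by norm_num, by norm_num, rfl⟩
  apply csSup_le hne
  rintro r ⟨x, hx, y, hy, hxy, rfl⟩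
  rw [div_le_iff₀ (abs_pos.2 (sub_ne_zero.2 hxy))]
  exact h x hx y hy

lemma lip_join' {g : ℝ → ℝ} {a b c : ℝ} {K : NNReal} (hab : a ≤ b) (hbc : b ≤ c)
    (h1 : LipschitzOnWith K g (Icc a b)) (h2 : LipschitzOnWith K g (Icc b c)) :
    LipschitzOnWith K g (Icc a c) := by
  rw [lipschitzOnWith_iff_dist_le_mul] at h1 h2 ⊢
  have key : ∀ x ∈ Icc a c, ∀ y ∈ Icc a c, x ≤ y → dist (g x) (g y) ≤ K * dist x y := by
    intro x hx y hy hxy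
    by_cases hyb : y ≤ b
    · exact h1 x ⟨hx.1, hxy.trans hyb⟩ y ⟨hy.1, hyb⟩
    · by_cases hxb : b ≤ x
      · exact h2 x ⟨hxb, hx.2⟩ y ⟨hxb.trans hxy, hy.2⟩
      · have hx' : x ≤ b := le_of_not_ge hxb
        have hy' : b ≤ y := le_of_not_ge hyb
        calc dist (g x) (g y) ≤ dist (g x) (g b) + dist (g b) (g y) := dist_triangle _ _ _
        _ ≤ K * dist x b + K * dist b y :=
            add_le_add (h1 x ⟨hx.1, hx'⟩ b ⟨hab, le_refl b⟩) (h2 b ⟨le_refl b, hbc⟩ y ⟨hy', hy.2⟩)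
        _ = K * dist x y := by
            rw [Real.dist_eq, Real.dist_eq, Real.dist_eq,
              abs_of_nonpos (by linarith), abs_of_nonpos (by linarith),
              abs_of_nonpos (by linarith)]
            ring
  intro x hx y hy
  rcases le_total x y with hxy | hxy
  · exact key x hx y hy hxy
  · rw [dist_comm (g x), dist_comm x]; exact key y hy x hx hxy

lemma lip_affine {a b : ℝ} {g : ℝ → ℝ} {s : Set ℝ} (h : ∀ x ∈ s, g x = a * x + b) :
    LipschitzOnWith ‖a‖₊ g s := by
  rw [lipschitzOnWith_iff_dist_le_mul]
  intro x hx y hy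
  rw [h x hx, h y hy, Real.dist_eq, Real.dist_eq]
  have e : a * x + b - (a * y + b) = a * (x - y) := by ring
  rw [e, abs_mul]
  have : ((‖a‖₊ : NNReal) : ℝ) = |a| := by simp [Real.norm_eq_abs]
  rw [this]

lemma lip_weaken {g : ℝ → ℝ} {s : Set ℝ} {K K' : NNReal} (h : LipschitzOnWith K g s)
    (hK : K ≤ K') : LipschitzOnWith K' g s := fun x hx y hy =>
  le_trans (h hx hy) (mul_le_mul_left (by exact_mod_cast hK) _)

lemma lip_pieces {g : ℝ → ℝ} {n : ℕ} (hn : 1 ≤ n) {C : NNReal}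
    (h : ∀ i : ℕ, 1 ≤ i → i ≤ n → LipschitzOnWith C g (Icc (((i:ℝ) - 1) / n) ((i:ℝ) / n))) :
    LipschitzOnWith C g (Icc 0 1) := by
  have npos : (0:ℝ) < n := by exact_mod_cast hn
  have main : ∀ m : ℕ, 1 ≤ m → m ≤ n → LipschitzOnWith C g (Icc 0 ((m:ℝ) / n)) := by
    intro m
    induction m with
    | zero => omega
    | succ k ih =>
      intro _ hle
      rcases Nat.eq_zero_or_pos k with rfl | hk
      · have := h 1 le_rfl hle
        simpa using this
      · have h1 := ih hk (by omega)
        have h2 := h (k + 1) (by omega) hle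
        have e : ((k:ℝ) + 1 - 1) / n = (k:ℝ) / n := by ring_nf
        rw [Nat.cast_succ] at h2 ⊢
        rw [e] at h2
        exact lip_join' (by positivity) (by gcongr; linarith) h1 h2
  have := main n hn le_rfl
  rwa [div_self npos.ne'] at this

lemma lip_pieces_ex {g : ℝ → ℝ} {n : ℕ} (hn : 1 ≤ n)
    (h : ∀ i : ℕ, 1 ≤ i → i ≤ n → ∃ K : NNReal, LipschitzOnWith K g (Icc (((i:ℝ) - 1) / n) ((i:ℝ) / n))) :
    ∃ K : NNReal, LipschitzOnWith K g (Icc 0 1) := by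
  classical
  let K : ℕ → NNReal := fun i => if h' : 1 ≤ i ∧ i ≤ n then (h i h'.1 h'.2).choose else 0
  refine ⟨(Finset.range (n + 1)).sup K, lip_pieces hn ?_⟩
  intro i hi1 hi2
  have : LipschitzOnWith (K i) g (Icc (((i:ℝ) - 1) / n) ((i:ℝ) / n)) := by
    simp only [K, dif_pos (⟨hi1, hi2⟩ : 1 ≤ i ∧ i ≤ n)]
    exact (h i hi1 hi2).choose_spec
  exact lip_weaken this (Finset.le_sup (Finset.mem_range.2 (by omega)))

lemma lip_sub {u v : ℝ → ℝ} {s : Set ℝ} {K1 K2 : NNReal} (h1 : LipschitzOnWith K1 u s)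
    (h2 : LipschitzOnWith K2 v s) : LipschitzOnWith (K1 + K2) (fun x => u x - v x) s := by
  rw [lipschitzOnWith_iff_dist_le_mul] at h1 h2 ⊢
  intro x hx y hy
  have e1 := h1 x hx y hy
  have e2 := h2 x hx y hy
  simp only [Real.dist_eq, NNReal.coe_add] at e1 e2 ⊢
  have e : u x - v x - (u y - v y) = (u x - u y) - (v x - v y) := by ring
  rw [e]
  calc |(u x - u y) - (v x - v y)| ≤ |u x - u y| + |v x - v y| := abs_sub _ _
  _ ≤ (K1 + K2) * |x - y| := by nlinarith [abs_nonneg (x - y)]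


/-- Convergence of the collocation method: `‖u - u_h‖ ≤ ‖u - P_h u‖ / (1 - q)` where
`q = (1 + ‖φ‖)(‖φ₁‖ + ‖φ₂‖) < 1`. -/
theorem collocation_convergence (φ φ₁ φ₂ f : ℝ → ℝ)
    (hφ : IsLipOn01 φ) (hφ0 : φ 0 = 0) (hφ1 : φ 1 = 1)
    (hφmem : ∀ x ∈ Icc (0:ℝ) 1, φ x ∈ Icc (0:ℝ) 1)
    (hφ₁ : IsLipOn01 φ₁) (hφ₁1 : φ₁ 1 = 1)
    (hφ₁mem : ∀ x ∈ Icc (0:ℝ) 1, φ₁ x ∈ Icc (0:ℝ) 1)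
    (hφ₂ : IsLipOn01 φ₂) (hφ₂0 : φ₂ 0 = 0)
    (hφ₂mem : ∀ x ∈ Icc (0:ℝ) 1, φ₂ x ∈ Icc (0:ℝ) 1)
    (hf : MemH01 f)
    (hcontr : (1 + lipSemi φ) * (lipSemi φ₁ + lipSemi φ₂) < 1)
    (u : ℝ → ℝ) (hu : MemH01 u)
    (heq : ∀ x ∈ Icc (0:ℝ) 1, u x = φ x * u (φ₁ x) + (1 - φ x) * u (φ₂ x) + f x)
    (n : ℕ) (hn : 1 ≤ n)
    (uh : ℝ → ℝ)
    (huhc : ContinuousOn uh (Icc (0:ℝ) 1))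
    (huhlin : ∀ i : ℕ, 1 ≤ i → i ≤ n → ∃ a b : ℝ,
      ∀ x ∈ Icc (((i:ℝ) - 1) / n) ((i:ℝ) / n), uh x = a * x + b)
    (huh0 : uh 0 = 0) (huh1 : uh 1 = 0)
    (hcolloc : ∀ i : ℕ, 1 ≤ i → i < n →
      uh ((i:ℝ) / n) = φ ((i:ℝ) / n) * uh (φ₁ ((i:ℝ) / n))
        + (1 - φ ((i:ℝ) / n)) * uh (φ₂ ((i:ℝ) / n)) + f ((i:ℝ) / n))
    (Pu : ℝ → ℝ)
    (hPu : ∀ i : ℕ, 1 ≤ i → i ≤ n →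
      ∀ x ∈ Icc (((i:ℝ) - 1) / n) ((i:ℝ) / n),
        Pu x = n * ((x - ((i:ℝ) - 1) / n) * u ((i:ℝ) / n)
          + ((i:ℝ) / n - x) * u (((i:ℝ) - 1) / n))) :
    lipSemi (fun x => u x - uh x) ≤
      lipSemi (fun x => u x - Pu x) /
        (1 - (1 + lipSemi φ) * (lipSemi φ₁ + lipSemi φ₂)) := by
  obtain ⟨huL, hu0, hu1⟩ := hu
  have npos : (0:ℝ) < n := by exact_mod_cast hn
  set Lφ := lipSemi φ with hLφdef
  set L1 := lipSemi φ₁ with hL1def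
  set L2 := lipSemi φ₂ with hL2def
  have h0φ : 0 ≤ Lφ := lipSemi_nonneg φ
  have h0₁ : 0 ≤ L1 := lipSemi_nonneg φ₁
  have h0₂ : 0 ≤ L2 := lipSemi_nonneg φ₂
  set q := (1 + Lφ) * (L1 + L2) with hqdef
  have hq0 : 0 ≤ q := by positivity
  have h1q : 0 < 1 - q := by linarith
  have hφb := lipSemi_bound hφ
  have hφ₁b := lipSemi_bound hφ₁
  have hφ₂b := lipSemi_bound hφ₂
  -- uh is Lipschitz on [0,1]
  have huhL : IsLipOn01 uh := by
    apply lip_pieces_ex hn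
    intro i hi1 hi2
    obtain ⟨a, b, hab⟩ := huhlin i hi1 hi2
    exact ⟨‖a‖₊, lip_affine hab⟩
  -- Pu is Lipschitz on [0,1]
  have hPuL : IsLipOn01 Pu := by
    apply lip_pieces_ex hn
    intro i hi1 hi2
    refine ⟨‖(n:ℝ) * (u ((i:ℝ)/n) - u (((i:ℝ)-1)/n))‖₊,
      lip_affine (b := (n:ℝ) * (-((((i:ℝ)-1)/n)) * u ((i:ℝ)/n) + ((i:ℝ)/n) * u (((i:ℝ)-1)/n)) ) ?_⟩
    intro x hx
    rw [hPu i hi1 hi2 x hx]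
    ring
  -- the error function v = u - uh is Lipschitz
  have hvL : IsLipOn01 (fun x => u x - uh x) := by
    obtain ⟨K1, hK1⟩ := huL
    obtain ⟨K2, hK2⟩ := huhL
    exact ⟨K1 + K2, lip_sub hK1 hK2⟩
  have hPvL : IsLipOn01 (fun x => u x - Pu x) := by
    obtain ⟨K1, hK1⟩ := huL
    obtain ⟨K2, hK2⟩ := hPuL
    exact ⟨K1 + K2, lip_sub hK1 hK2⟩
  set Lv := lipSemi (fun x => u x - uh x) with hLvdef
  set LP := lipSemi (fun x => u x - Pu x) with hLPdef
  have h0v : 0 ≤ Lv := lipSemi_nonneg _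
  have hvb : ∀ x ∈ Icc (0:ℝ) 1, ∀ y ∈ Icc (0:ℝ) 1,
      |(u x - uh x) - (u y - uh y)| ≤ Lv * |x - y| :=
    fun x hx y hy => lipSemi_bound hvL x hx y hy
  have hPb : ∀ x ∈ Icc (0:ℝ) 1, ∀ y ∈ Icc (0:ℝ) 1,
      |(u x - Pu x) - (u y - Pu y)| ≤ LP * |x - y| :=
    fun x hx y hy => lipSemi_bound hPvL x hx y hy
  -- node membership
  have hmem : ∀ i : ℕ, i ≤ n → ((i:ℝ)/n) ∈ Icc (0:ℝ) 1 := by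
    intro i hi
    constructor
    · positivity
    · rw [div_le_one npos]; exact_mod_cast hi
  -- Pu at nodes equals u
  have hPunode : ∀ i : ℕ, i ≤ n → Pu ((i:ℝ)/n) = u ((i:ℝ)/n) := by
    intro i hi
    rcases Nat.eq_zero_or_pos i with rfl | hipos
    · have h0 : ((0:ℕ):ℝ)/n = 0 := by norm_num
      rw [h0]
      have hm' : (0:ℝ) ∈ Icc ((((1:ℕ):ℝ) - 1)/n) (((1:ℕ):ℝ)/n) := ⟨by norm_num, by positivity⟩
      have := hPu 1 le_rfl hn 0 hm'
      rw [this]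
      push_cast
      norm_num
      field_simp
    · have := hPu i hipos hi ((i:ℝ)/n) ⟨by gcongr <;> linarith, le_rfl⟩
      rw [this]
      field_simp
      try ring
  -- the operator T applied to v
  set Tv : ℝ → ℝ := fun x => φ x * (u (φ₁ x) - uh (φ₁ x)) + (1 - φ x) * (u (φ₂ x) - uh (φ₂ x))
    with hTvdef
  -- node identity : (Pu - uh)(x_i) = Tv(x_i)
  have hwnode : ∀ i : ℕ, i ≤ n → Pu ((i:ℝ)/n) - uh ((i:ℝ)/n) = Tv ((i:ℝ)/n) := by
    intro i hi
    rw [hPunode i hi]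
    rcases Nat.eq_zero_or_pos i with rfl | hipos
    · have h0 : ((0:ℕ):ℝ)/n = 0 := by norm_num
      rw [h0]
      simp only [Tv, hφ0, hφ₂0, hu0, huh0]
      ring
    · rcases eq_or_lt_of_le hi with rfl | hilt
      · have h1 : ((i:ℝ))/(i:ℝ) = 1 := div_self (by exact_mod_cast hipos.ne')
        push_cast
        rw [h1]
        simp only [Tv, hφ1, hφ₁1, hu1, huh1]
        ring
      · have hx := hmem i hi
        have e1 := heq ((i:ℝ)/n) hx
        have e2 := hcolloc i hipos hilt
        simp only [Tv]
        rw [e1, e2]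
        ring
  -- the key contraction estimate for Tv
  have hTest : ∀ x ∈ Icc (0:ℝ) 1, ∀ y ∈ Icc (0:ℝ) 1, |Tv x - Tv y| ≤ q * Lv * |x - y| := by
    intro x hx y hy
    have hm1x := hφ₁mem x hx
    have hm1y := hφ₁mem y hy
    have hm2x := hφ₂mem x hx
    have hm2y := hφ₂mem y hy
    have hmφx := hφmem x hx
    have hA : |(u (φ₁ x) - uh (φ₁ x)) - (u (φ₁ y) - uh (φ₁ y))| ≤ Lv * (L1 * |x - y|) := by
      calc _ ≤ Lv * |φ₁ x - φ₁ y| := hvb _ hm1x _ hm1y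
      _ ≤ Lv * (L1 * |x - y|) := by
          apply mul_le_mul_of_nonneg_left (hφ₁b x hx y hy) h0v
    have hE : |(u (φ₂ x) - uh (φ₂ x)) - (u (φ₂ y) - uh (φ₂ y))| ≤ Lv * (L2 * |x - y|) := by
      calc _ ≤ Lv * |φ₂ x - φ₂ y| := hvb _ hm2x _ hm2y
      _ ≤ Lv * (L2 * |x - y|) := by
          apply mul_le_mul_of_nonneg_left (hφ₂b x hx y hy) h0v
    have hB : |φ x - φ y| ≤ Lφ * |x - y| := hφb x hx y hy
    have one_mem : (1:ℝ) ∈ Icc (0:ℝ) 1 := by norm_num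
    have zero_mem : (0:ℝ) ∈ Icc (0:ℝ) 1 := by norm_num
    have hd1 : |u (φ₁ y) - uh (φ₁ y)| ≤ Lv * L1 := by
      have h1 := hvb _ hm1y _ (hφ₁mem 1 one_mem)
      rw [hφ₁1, hu1, huh1] at h1
      have h3 : |y - 1| ≤ 1 := by
        rw [abs_le]; constructor <;> [linarith [hy.1]; linarith [hy.2]]
      have h2 : |φ₁ y - 1| ≤ L1 := by
        have h4 := hφ₁b y hy 1 one_mem
        rw [hφ₁1] at h4
        calc |φ₁ y - 1| ≤ L1 * |y - 1| := h4
        _ ≤ L1 * 1 := mul_le_mul_of_nonneg_left h3 h0₁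
        _ = L1 := mul_one L1
      calc |u (φ₁ y) - uh (φ₁ y)| = |u (φ₁ y) - uh (φ₁ y) - (0 - 0)| := by norm_num
      _ ≤ Lv * |φ₁ y - 1| := h1
      _ ≤ Lv * L1 := mul_le_mul_of_nonneg_left h2 h0v
    have hd2 : |u (φ₂ y) - uh (φ₂ y)| ≤ Lv * L2 := by
      have h1 := hvb _ hm2y _ (hφ₂mem 0 zero_mem)
      rw [hφ₂0, hu0, huh0] at h1
      have h3 : |y - 0| ≤ 1 := by
        rw [abs_le]; constructor <;> [linarith [hy.1]; linarith [hy.2]]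
      have h2 : |φ₂ y - 0| ≤ L2 := by
        have h4 := hφ₂b y hy 0 zero_mem
        rw [hφ₂0] at h4
        calc |φ₂ y - 0| ≤ L2 * |y - 0| := h4
        _ ≤ L2 * 1 := mul_le_mul_of_nonneg_left h3 h0₂
        _ = L2 := mul_one L2
      calc |u (φ₂ y) - uh (φ₂ y)| = |u (φ₂ y) - uh (φ₂ y) - (0 - 0)| := by norm_num
      _ ≤ Lv * |φ₂ y - 0| := h1
      _ ≤ Lv * L2 := mul_le_mul_of_nonneg_left h2 h0v
    have hD : |(u (φ₁ y) - uh (φ₁ y)) - (u (φ₂ y) - uh (φ₂ y))| ≤ Lv * L1 + Lv * L2 := by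
      calc _ ≤ |u (φ₁ y) - uh (φ₁ y)| + |u (φ₂ y) - uh (φ₂ y)| := abs_sub _ _
      _ ≤ Lv * L1 + Lv * L2 := add_le_add hd1 hd2
    have hφabs : |φ x| ≤ 1 := by rw [abs_le]; exact ⟨by linarith [hmφx.1], hmφx.2⟩
    have hφabs' : |1 - φ x| ≤ 1 := by
      rw [abs_le]; constructor <;> [linarith [hmφx.2]; linarith [hmφx.1]]
    have hid : Tv x - Tv y =
        φ x * ((u (φ₁ x) - uh (φ₁ x)) - (u (φ₁ y) - uh (φ₁ y)))
        + (φ x - φ y) * ((u (φ₁ y) - uh (φ₁ y)) - (u (φ₂ y) - uh (φ₂ y)))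
        + (1 - φ x) * ((u (φ₂ x) - uh (φ₂ x)) - (u (φ₂ y) - uh (φ₂ y))) := by
      simp only [Tv]; ring
    rw [hid]
    have tri : ∀ a b c : ℝ, |a + b + c| ≤ |a| + |b| + |c| := fun a b c =>
      (abs_add_le _ _).trans (add_le_add_left (abs_add_le a b) _)
    calc _ ≤ |φ x * ((u (φ₁ x) - uh (φ₁ x)) - (u (φ₁ y) - uh (φ₁ y)))|
          + |(φ x - φ y) * ((u (φ₁ y) - uh (φ₁ y)) - (u (φ₂ y) - uh (φ₂ y)))|
          + |(1 - φ x) * ((u (φ₂ x) - uh (φ₂ x)) - (u (φ₂ y) - uh (φ₂ y)))| := tri _ _ _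
    _ ≤ 1 * (Lv * (L1 * |x - y|)) + (Lφ * |x - y|) * (Lv * L1 + Lv * L2)
          + 1 * (Lv * (L2 * |x - y|)) := by
        rw [abs_mul, abs_mul, abs_mul]
        refine add_le_add (add_le_add ?_ ?_) ?_
        · exact mul_le_mul hφabs hA (abs_nonneg _) one_pos.le
        · exact mul_le_mul hB hD (abs_nonneg _) (by positivity)
        · exact mul_le_mul hφabs' hE (abs_nonneg _) one_pos.le
    _ = q * Lv * |x - y| := by rw [hqdef]; ring
  -- w = Pu - uh is piecewise affine with slope bounded by q * Lv
  have hqLv : 0 ≤ q * Lv := mul_nonneg hq0 h0v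
  have hwlip : LipschitzOnWith (q * Lv).toNNReal (fun x => Pu x - uh x) (Icc 0 1) := by
    apply lip_pieces hn
    intro i hi1 hi2
    obtain ⟨a, b, hab⟩ := huhlin i hi1 hi2
    set A := (n:ℝ) * (u ((i:ℝ)/n) - u (((i:ℝ)-1)/n)) - a with hAdef
    have haff : ∀ x ∈ Icc (((i:ℝ)-1)/n) ((i:ℝ)/n), Pu x - uh x =
        A * x + ((n:ℝ) * (-((((i:ℝ)-1)/n)) * u ((i:ℝ)/n) + ((i:ℝ)/n) * u (((i:ℝ)-1)/n)) - b) := by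
      intro x hx
      rw [hPu i hi1 hi2 x hx, hab x hx, hAdef]
      ring
    have hep : (((i:ℝ)-1)/n) < ((i:ℝ)/n) := by gcongr <;> linarith
    have hmemr := hmem i hi2
    have hmeml : (((i:ℝ)-1)/n) ∈ Icc (0:ℝ) 1 := by
      constructor
      · apply div_nonneg ?_ npos.le
        have : (1:ℝ) ≤ (i:ℝ) := by exact_mod_cast hi1
        linarith
      · rw [div_le_one npos]
        have : (i:ℝ) ≤ (n:ℝ) := by exact_mod_cast hi2
        linarith
    -- node values give the slope bound
    have hcast : (((i - 1 : ℕ)):ℝ) = (i:ℝ) - 1 := by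
      push_cast [hi1]; ring
    have hndl := hwnode (i - 1) (by omega)
    rw [hcast] at hndl
    have hndr := hwnode i hi2
    have hTd := hTest ((i:ℝ)/n) hmemr (((i:ℝ)-1)/n) hmeml
    have hdist : |(i:ℝ)/n - ((i:ℝ)-1)/n| = 1/n := by
      rw [abs_of_pos (by linarith)]
      field_simp
      ring
    rw [hdist] at hTd
    have hdiff : (Pu ((i:ℝ)/n) - uh ((i:ℝ)/n)) - (Pu (((i:ℝ)-1)/n) - uh (((i:ℝ)-1)/n))
        = A * (1/n) := by
      rw [haff _ ⟨hep.le, le_rfl⟩, haff _ ⟨le_rfl, hep.le⟩]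
      field_simp
      ring
    have hslope : |A| ≤ q * Lv := by
      have h1 : |A * (1/n)| ≤ q * Lv * (1/n) := by
        rw [← hdiff, hndl, hndr]
        exact hTd
      rw [abs_mul, abs_of_pos (by positivity : (0:ℝ) < 1/n)] at h1
      have hn1 : (0:ℝ) < 1/n := by positivity
      calc |A| = |A| * (1/n) / (1/n) := by field_simp
      _ ≤ q * Lv * (1/n) / (1/n) := by gcongr
      _ = q * Lv := by field_simp
    rw [lipschitzOnWith_iff_dist_le_mul]
    intro x hx y hy
    rw [Real.dist_eq, Real.dist_eq, haff x hx, haff y hy,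
      Real.coe_toNNReal _ hqLv]
    have e : A * x + ((n:ℝ) * (-((((i:ℝ)-1)/n)) * u ((i:ℝ)/n) + ((i:ℝ)/n) * u (((i:ℝ)-1)/n)) - b)
        - (A * y + ((n:ℝ) * (-((((i:ℝ)-1)/n)) * u ((i:ℝ)/n) + ((i:ℝ)/n) * u (((i:ℝ)-1)/n)) - b))
        = A * (x - y) := by ring
    rw [e, abs_mul]
    exact mul_le_mul_of_nonneg_right hslope (abs_nonneg _)
  -- conclude
  have hwb : ∀ x ∈ Icc (0:ℝ) 1, ∀ y ∈ Icc (0:ℝ) 1,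
      |(Pu x - uh x) - (Pu y - uh y)| ≤ q * Lv * |x - y| := by
    intro x hx y hy
    have := hwlip.dist_le_mul x hx y hy
    rw [Real.dist_eq, Real.dist_eq, Real.coe_toNNReal _ hqLv] at this
    exact this
  have hmain : Lv ≤ LP + q * Lv := by
    apply lipSemi_le
    intro x hx y hy
    show |u x - uh x - (u y - uh y)| ≤ (LP + q * Lv) * |x - y|
    have h1 := hPb x hx y hy
    have h2 := hwb x hx y hy
    have e : u x - uh x - (u y - uh y) =
        ((u x - Pu x) - (u y - Pu y)) + ((Pu x - uh x) - (Pu y - uh y)) := by ring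
    calc |u x - uh x - (u y - uh y)|
        ≤ |(u x - Pu x) - (u y - Pu y)| + |(Pu x - uh x) - (Pu y - uh y)| := by
          rw [e]; exact abs_add_le _ _
    _ ≤ LP * |x - y| + q * Lv * |x - y| := add_le_add h1 h2
    _ = (LP + q * Lv) * |x - y| := by ring
  show Lv ≤ LP / (1 - q)
  rw [le_div_iff₀ h1q]
  nlinarith [hmain]
end

section
/- Let 0 < α = β < 1 with 2(α+β) < 1 (i.e., α < 1/4). Then the unique Lipschitz function v : [0,1] → ℝ with v(0) = 0, v(1) = 1 satisfying the paradise fish equation v(x) = x·v(1−α+α·x) + (1−x)·v(β·x) on [0,1] is v(x) = x. -/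
open Set

/-- For `α = β` (with `2(α+β) < 1`), the unique Lipschitz solution of the paradise fish
equation with `v 0 = 0`, `v 1 = 1` is the identity `v x = x`. -/
theorem paradise_fish_trivial_solution (α β : ℝ) (hα : 0 < α) (hαβ : α = β) (hβ : β < 1)
    (hcontr : 2 * (α + β) < 1) :
    (∀ x ∈ Icc (0:ℝ) 1, x = x * (1 - α + α * x) + (1 - x) * (β * x)) ∧
    ∀ v : ℝ → ℝ, IsLipOn01 v → v 0 = 0 → v 1 = 1 →
      (∀ x ∈ Icc (0:ℝ) 1, v x = x * v (1 - α + α * x) + (1 - x) * v (β * x)) →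
      ∀ x ∈ Icc (0:ℝ) 1, v x = x := by
  subst hαβ
  refine ⟨fun x _ => by ring, ?_⟩
  rintro v ⟨K, hK⟩ hv0 hv1 heq x hx
  set c : ℝ := α + α with hc
  have hc0 : (0:ℝ) ≤ c := by positivity
  have hc1 : c < 1 := by linarith
  set C : ℝ := 2 * ((K:ℝ) + 1) with hC
  have hC0 : (0:ℝ) ≤ C := by positivity
  have h0m : (0:ℝ) ∈ Icc (0:ℝ) 1 := by norm_num
  have h1m : (1:ℝ) ∈ Icc (0:ℝ) 1 := by norm_num
  have hdist : ∀ a ∈ Icc (0:ℝ) 1, ∀ b ∈ Icc (0:ℝ) 1,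
      |v a - v b| ≤ (K:ℝ) * |a - b| := by
    intro a ha b hb
    have := hK.dist_le_mul a ha b hb
    simpa [Real.dist_eq] using this
  have key : ∀ n : ℕ, ∀ x ∈ Icc (0:ℝ) 1, |v x - x| ≤ C * c ^ n * (x * (1 - x)) := by
    intro n
    induction n with
    | zero =>
      intro x hx
      obtain ⟨hx0, hx1⟩ := hx
      have hKx : |v x - x| ≤ ((K:ℝ) + 1) * x := by
        have h1 := hdist x ⟨hx0, hx1⟩ 0 h0m
        rw [hv0] at h1
        have : |v x - x| ≤ |v x - 0| + |x| := by
          have := abs_sub (v x - 0) x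
          calc |v x - x| = |(v x - 0) - x| := by ring_nf
            _ ≤ |v x - 0| + |x| := abs_sub _ _
        rw [abs_of_nonneg hx0] at this
        have h2 : |x - 0| = x := by rw [sub_zero, abs_of_nonneg hx0]
        rw [h2] at h1
        nlinarith
      have hKy : |v x - x| ≤ ((K:ℝ) + 1) * (1 - x) := by
        have h1 := hdist x ⟨hx0, hx1⟩ 1 h1m
        rw [hv1] at h1
        have h3 : |v x - x| ≤ |v x - 1| + |1 - x| := by
          calc |v x - x| = |(v x - 1) + (1 - x)| := by ring_nf
            _ ≤ |v x - 1| + |1 - x| := abs_add_le _ _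
        rw [abs_of_nonneg (by linarith : (0:ℝ) ≤ 1 - x)] at h3
        have h2 : |x - 1| = 1 - x := by
          rw [abs_sub_comm, abs_of_nonneg (by linarith : (0:ℝ) ≤ 1 - x)]
        rw [h2] at h1
        nlinarith
      rcases le_or_gt x (1/2) with h | h
      · calc |v x - x| ≤ ((K:ℝ) + 1) * x := hKx
          _ ≤ C * c ^ 0 * (x * (1 - x)) := by
            simp only [pow_zero, mul_one, hC]
            nlinarith [mul_nonneg (mul_nonneg (by positivity : (0:ℝ) ≤ (K:ℝ)+1) hx0)
              (by linarith : (0:ℝ) ≤ 1 - 2*x)]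
      · calc |v x - x| ≤ ((K:ℝ) + 1) * (1 - x) := hKy
          _ ≤ C * c ^ 0 * (x * (1 - x)) := by
            simp only [pow_zero, mul_one, hC]
            nlinarith [mul_nonneg (mul_nonneg (by positivity : (0:ℝ) ≤ (K:ℝ)+1)
              (by linarith : (0:ℝ) ≤ 1 - x)) (by linarith : (0:ℝ) ≤ 2*x - 1)]
    | succ n ih =>
      intro x hx
      obtain ⟨hx0, hx1⟩ := hx
      set y1 : ℝ := 1 - α + α * x with hy1
      set y2 : ℝ := α * x with hy2
      have hy1m : y1 ∈ Icc (0:ℝ) 1 := by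
        constructor <;> [nlinarith; nlinarith]
      have hy2m : y2 ∈ Icc (0:ℝ) 1 := by
        constructor <;> [positivity; nlinarith]
      have h1 := ih y1 hy1m
      have h2 := ih y2 hy2m
      have hsplit : v x - x = x * (v y1 - y1) + (1 - x) * (v y2 - y2) := by
        have := heq x ⟨hx0, hx1⟩
        rw [this, hy1, hy2]; ring
      have habs : |v x - x| ≤ x * |v y1 - y1| + (1 - x) * |v y2 - y2| := by
        rw [hsplit]
        calc |x * (v y1 - y1) + (1 - x) * (v y2 - y2)|
            ≤ |x * (v y1 - y1)| + |(1 - x) * (v y2 - y2)| := abs_add_le _ _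
          _ = x * |v y1 - y1| + (1 - x) * |v y2 - y2| := by
              rw [abs_mul, abs_mul, abs_of_nonneg hx0,
                abs_of_nonneg (by linarith : (0:ℝ) ≤ 1 - x)]
      have hb1 : y1 * (1 - y1) ≤ α * (1 - x) := by
        have : 1 - y1 = α * (1 - x) := by rw [hy1]; ring
        rw [this]
        nlinarith [hy1m.1, hy1m.2]
      have hb2 : y2 * (1 - y2) ≤ α * x := by
        rw [hy2]; nlinarith [hy2m.1, hy2m.2]
      have hcn : (0:ℝ) ≤ C * c ^ n := by positivity
      calc |v x - x| ≤ x * |v y1 - y1| + (1 - x) * |v y2 - y2| := habs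
        _ ≤ x * (C * c ^ n * (y1 * (1 - y1))) + (1 - x) * (C * c ^ n * (y2 * (1 - y2))) := by
            gcongr <;> first | exact abs_nonneg _ | linarith
        _ ≤ x * (C * c ^ n * (α * (1 - x))) + (1 - x) * (C * c ^ n * (α * x)) := by
            gcongr <;> first | assumption | linarith
        _ = C * c ^ (n + 1) * (x * (1 - x)) := by rw [hc]; ring
  obtain ⟨hx0, hx1⟩ := hx
  have hten : Filter.Tendsto (fun n : ℕ => C * c ^ n * (x * (1 - x)))
      Filter.atTop (nhds 0) := by
    have := (tendsto_pow_atTop_nhds_zero_of_lt_one hc0 hc1).const_mul C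
    have h2 := this.mul_const (x * (1 - x))
    simpa using h2
  have hle : |v x - x| ≤ 0 := ge_of_tendsto' hten (fun n => key n x ⟨hx0, hx1⟩)
  have := abs_nonneg (v x - x)
  have : |v x - x| = 0 := le_antisymm hle this
  have := abs_eq_zero.mp this
  linarith
end
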